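/- arXiv:2106.03306 — 3 statements merged into one kernel-verified Lean document; each statement's English description precedes it below -/
import Mathlib

section
/- Let ℍ^d be the Poincaré ball model of hyperbolic space, p an ideal point, b ∈ ℍ^d a base point, and define the horospherical projection π^H_{b,p}(x) as the unique intersection point of the geodesic γ = GH(b,p) with the horosphere S(p,x). Then for any x ∈ ℍ^d and any y lying in GH(x,p) (the geodesic through x having p as an ideal endpoint), one has d_ℍ(π^H_{b,p}(x), π^H_{b,p}(y)) = d_ℍ(x,y). -/
noncomputable section

open Set

/-- Ambient Euclidean space `ℝ^d`. -/
abbrev E (d : ℕ) : Type := EuclideanSpace ℝ (Fin d)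

/-- The open unit (Poincaré) ball `ℍ^d`. -/
def pball (d : ℕ) : Set (E d) := {x | ‖x‖ < 1}

/-- Inverse hyperbolic cosine. -/
def arcosh (t : ℝ) : ℝ := Real.log (t + Real.sqrt (t ^ 2 - 1))

/-- Hyperbolic distance in the Poincaré ball model. -/
def dH {d : ℕ} (x y : E d) : ℝ :=
  arcosh (1 + 2 * ‖x - y‖ ^ 2 / ((1 - ‖x‖ ^ 2) * (1 - ‖y‖ ^ 2)))

/-- A unit-speed parameterized complete geodesic of the Poincaré ball. -/
def IsUnitSpeedGeodesic {d : ℕ} (γ : ℝ → E d) : Prop :=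
  (∀ t, γ t ∈ pball d) ∧ ∀ s t : ℝ, dH (γ s) (γ t) = |s - t|

/-- A subset of the ball which is a complete geodesic line. -/
def IsGeodesicLine {d : ℕ} (c : Set (E d)) : Prop :=
  ∃ γ : ℝ → E d, IsUnitSpeedGeodesic γ ∧ c = Set.range γ

/-- Totally geodesic subset of the Poincaré ball: it contains every complete geodesic
through any two of its points. -/
def TotGeodesic {d : ℕ} (M : Set (E d)) : Prop :=
  M ⊆ pball d ∧
    ∀ x ∈ M, ∀ y ∈ M, x ≠ y →
      ∀ c : Set (E d), IsGeodesicLine c → x ∈ c → y ∈ c → c ⊆ M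

/-- Geodesic hull of a set `S` of points of the ball and/or ideal boundary points:
the smallest totally geodesic subset containing the ball-points of `S` and whose
closure contains all of `S` (in particular the ideal points of `S`). -/
def GH {d : ℕ} (S : Set (E d)) : Set (E d) :=
  ⋂₀ {M : Set (E d) | TotGeodesic M ∧ S ∩ pball d ⊆ M ∧ S ⊆ closure M}

/-- Busemann function of the ideal point `p`. -/
def busemann {d : ℕ} (p x : E d) : ℝ := Real.log (‖p - x‖ ^ 2 / (1 - ‖x‖ ^ 2))

/-- Horosphere centered at the ideal point `p` passing through `x`. -/
def horosphere {d : ℕ} (p x : E d) : Set (E d) :=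
  {y ∈ pball d | busemann p y = busemann p x}

/-- `S(x)`: intersection of the horospheres through `x` centered at the ideal points `p i`. -/
def horoInter {d K : ℕ} (p : Fin K → E d) (x : E d) : Set (E d) :=
  ⋂ i, horosphere (p i) x

/-- Isometry of hyperbolic space (Poincaré ball model). -/
def IsHypIsometry {d : ℕ} (φ : E d → E d) : Prop :=
  Set.BijOn φ (pball d) (pball d) ∧
    ∀ x ∈ pball d, ∀ y ∈ pball d, dH (φ x) (φ y) = dH x y

/-- A rotation around `P`: an isometry of `ℍ^d` fixing every point of `P`. -/
def IsRotationAround {d : ℕ} (P : Set (E d)) (φ : E d → E d) : Prop :=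
  IsHypIsometry φ ∧ ∀ q ∈ P, φ q = q

/-- `m` is a nearest point of `M` to `x`. -/
def IsNearestPt {d : ℕ} (M : Set (E d)) (x m : E d) : Prop :=
  m ∈ M ∧ ∀ y ∈ M, dH x m ≤ dH x y

/-- `π` is the geodesic (closest-point) projection onto `M`. -/
def IsGeodProj {d : ℕ} (M : Set (E d)) (π : E d → E d) : Prop :=
  ∀ x ∈ pball d, IsNearestPt M x (π x)

/-- `π` is the horospherical projection determined by the base point `b` and the
ideal points `p 0, …, p (K-1)`: it sends `x` to the point of
`GH(b,p₁,…,p_K) ∩ S(x)` strictly closer to `b` (and fixes the spine pointwise). -/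
def IsHoroProj {d K : ℕ} (b : E d) (p : Fin K → E d) (π : E d → E d) : Prop :=
  ∀ x ∈ pball d,
    π x ∈ GH (insert b (Set.range p)) ∩ horoInter p x ∧
    (∀ z ∈ GH (insert b (Set.range p)) ∩ horoInter p x, z ≠ π x → dH b (π x) < dH b z) ∧
    (x ∈ GH (Set.range p) → π x = x)

/-- Tangent directions at `c` of unit-speed geodesics contained in `M`. -/
def tangentDirs {d : ℕ} (M : Set (E d)) (c : E d) : Set (E d) :=
  {v | ∃ γ : ℝ → E d, IsUnitSpeedGeodesic γ ∧ Set.range γ ⊆ M ∧ γ 0 = c ∧ HasDerivAt γ v 0}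

/-- `x` and `y` lie on the same side of `L` inside the ball. -/
def SameSide {d : ℕ} (L : Set (E d)) (x y : E d) : Prop :=
  ∃ C : Set (E d), IsConnected C ∧ C ⊆ pball d \ L ∧ x ∈ C ∧ y ∈ C

/-- The (closed) half of `M` bounded by `P` that contains `b`. -/
def halfOf {d : ℕ} (M P : Set (E d)) (b : E d) : Set (E d) :=
  P ∪ connectedComponentIn (M \ P) b

/-- Hyperbolic length of a path `γ` with derivative `γ'` over `[a, b]`. -/
def hypLen {d : ℕ} (γ γ' : ℝ → E d) (a b : ℝ) : ℝ :=
  ∫ t in a..b, 2 * ‖γ' t‖ / (1 - ‖γ t‖ ^ 2)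

/-- `N ⊆ ℝ^d` is a `k`-dimensional topological submanifold (without boundary). -/
def IsTopSubmanifoldOfDim {d : ℕ} (k : ℕ) (N : Set (E d)) : Prop :=
  ∀ y ∈ N, ∃ U : Set (E d), IsOpen U ∧ y ∈ U ∧
    ∃ V : Set (EuclideanSpace ℝ (Fin k)), IsOpen V ∧ Nonempty (↥(U ∩ N) ≃ₜ ↥V)

/-- The model (closed) half-space of `ℝ^k`. -/
def modelHalfSpace (k : ℕ) : Set (EuclideanSpace ℝ (Fin k)) :=
  {v | ∀ i : Fin k, (i : ℕ) = 0 → 0 ≤ v i}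

/-- `N ⊆ ℝ^d` is a `k`-dimensional topological submanifold with boundary. -/
def IsTopSubmanifoldWithBdryOfDim {d : ℕ} (k : ℕ) (N : Set (E d)) : Prop :=
  ∀ y ∈ N, ∃ U : Set (E d), IsOpen U ∧ y ∈ U ∧
    ∃ V : Set (EuclideanSpace ℝ (Fin k)),
      (∃ W : Set (EuclideanSpace ℝ (Fin k)), IsOpen W ∧ V = W ∩ modelHalfSpace k) ∧
      Nonempty (↥(U ∩ N) ≃ₜ ↥V)

/-- Geodesically convex subset of the ball. -/
def GeodConvex {d : ℕ} (N : Set (E d)) : Prop :=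
  N ⊆ pball d ∧
    ∀ x ∈ N, ∀ y ∈ N, ∀ γ : ℝ → E d, IsUnitSpeedGeodesic γ →
      ∀ s t : ℝ, γ s = x → γ t = y → ∀ u ∈ Set.uIcc s t, γ u ∈ N


namespace HoroAux

open RealInnerProductSpace

variable {d : ℕ}

/-- Minkowski bilinear form on `ℝ × E d`. -/
def eta (X Y : ℝ × E d) : ℝ := X.1 * Y.1 - ⟪X.2, Y.2⟫

/-- Lift of a ball point to the hyperboloid. -/
def lft (x : E d) : ℝ × E d := ((1 + ‖x‖^2)/(1 - ‖x‖^2), (2/(1 - ‖x‖^2)) • x)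

lemma pos_of_pball {x : E d} (hx : x ∈ pball d) : 0 < 1 - ‖x‖^2 := by
  have h : ‖x‖ < 1 := hx
  nlinarith [norm_nonneg x]

lemma eta_comm (X Y : ℝ × E d) : eta X Y = eta Y X := by
  simp [eta, real_inner_comm, mul_comm]

lemma eta_lft {x y : E d} (hx : x ∈ pball d) (hy : y ∈ pball d) :
    eta (lft x) (lft y) = 1 + 2 * ‖x - y‖^2 / ((1 - ‖x‖^2) * (1 - ‖y‖^2)) := by
  have hx' := pos_of_pball hx
  have hy' := pos_of_pball hy
  simp only [eta, lft, real_inner_smul_left, real_inner_smul_right]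
  rw [norm_sub_sq_real]
  field_simp
  ring

lemma eta_lft_self {x : E d} (hx : x ∈ pball d) : eta (lft x) (lft x) = 1 := by
  rw [eta_lft hx hx]
  simp

lemma dH_lft {x y : E d} (hx : x ∈ pball d) (hy : y ∈ pball d) :
    dH x y = arcosh (eta (lft x) (lft y)) := by
  rw [eta_lft hx hy, dH]

lemma one_le_eta_lft {x y : E d} (hx : x ∈ pball d) (hy : y ∈ pball d) :
    1 ≤ eta (lft x) (lft y) := by
  rw [eta_lft hx hy]
  have := pos_of_pball hx
  have := pos_of_pball hy
  have h2 : (0:ℝ) ≤ 2 * ‖x - y‖^2 / ((1 - ‖x‖^2) * (1 - ‖y‖^2)) := by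
    apply div_nonneg (by positivity) (le_of_lt (by positivity))
  linarith

lemma one_lt_eta_lft {x y : E d} (hx : x ∈ pball d) (hy : y ∈ pball d) (hxy : x ≠ y) :
    1 < eta (lft x) (lft y) := by
  rw [eta_lft hx hy]
  have := pos_of_pball hx
  have := pos_of_pball hy
  have hn : 0 < ‖x - y‖ := by
    rw [norm_pos_iff, sub_ne_zero]; exact hxy
  have h2 : (0:ℝ) < 2 * ‖x - y‖^2 / ((1 - ‖x‖^2) * (1 - ‖y‖^2)) := by positivity
  linarith

lemma eta_lft_P {p : E d} (hp : ‖p‖ = 1) {x : E d} (hx : x ∈ pball d) :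
    eta (lft x) (1, p) = ‖p - x‖^2 / (1 - ‖x‖^2) := by
  have hx' := pos_of_pball hx
  simp only [eta, lft, real_inner_smul_left]
  rw [norm_sub_sq_real, hp, real_inner_comm]
  field_simp
  ring

lemma eta_PP {p : E d} (hp : ‖p‖ = 1) : eta ((1 : ℝ), p) (1, p) = 0 := by
  simp only [eta]
  rw [real_inner_self_eq_norm_sq, hp]
  ring

lemma eta_lft_P_pos {p : E d} (hp : ‖p‖ = 1) {x : E d} (hx : x ∈ pball d) :
    0 < eta (lft x) (1, p) := by
  rw [eta_lft_P hp hx]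
  have hx' := pos_of_pball hx
  have hpx : p ≠ x := by
    intro h
    subst h
    exact absurd (show ‖p‖ < 1 from hx) (by rw [hp]; exact lt_irrefl 1)
  have : 0 < ‖p - x‖ := by rw [norm_pos_iff, sub_ne_zero]; exact hpx
  positivity

lemma busemann_eta {p : E d} (hp : ‖p‖ = 1) {x : E d} (hx : x ∈ pball d) :
    busemann p x = Real.log (eta (lft x) (1, p)) := by
  rw [busemann, eta_lft_P hp hx]

lemma cosh_arcosh {t : ℝ} (ht : 1 ≤ t) : Real.cosh (arcosh t) = t := by
  have h0 : (0:ℝ) ≤ t^2 - 1 := by nlinarith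
  have hs := Real.sqrt_nonneg (t^2 - 1)
  have h2 : Real.sqrt (t^2-1) ^ 2 = t^2 - 1 := Real.sq_sqrt h0
  have h3 : 0 < t + Real.sqrt (t^2-1) := by nlinarith
  rw [arcosh, Real.cosh_eq, Real.exp_log h3, Real.exp_neg, Real.exp_log h3]
  field_simp
  nlinarith [h2]

lemma arcosh_cosh (s : ℝ) : arcosh (Real.cosh s) = |s| := by
  have h1 : Real.cosh s ^ 2 - 1 = Real.sinh s ^ 2 := by
    have := Real.cosh_sq s; linarith
  rw [arcosh, h1]
  have h2 : Real.sqrt (Real.sinh s ^ 2) = |Real.sinh s| := by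
    rw [Real.sqrt_sq_eq_abs]
  rw [h2]
  rcases le_or_gt 0 s with h | h
  · have hs : 0 ≤ Real.sinh s := by
      rw [Real.sinh_eq]
      have := Real.exp_le_exp.mpr (neg_le_self h)
      linarith
    rw [abs_of_nonneg hs, Real.cosh_add_sinh, Real.log_exp, abs_of_nonneg h]
  · have hs : Real.sinh s < 0 := by
      rw [Real.sinh_eq]
      have := Real.exp_lt_exp.mpr (show s < -s by linarith)
      linarith
    rw [abs_of_neg hs, ← sub_eq_add_neg, Real.cosh_sub_sinh, Real.log_exp, abs_of_neg h]

lemma arcosh_one : arcosh 1 = 0 := by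
  have := arcosh_cosh 0
  simpa using this

lemma cosh_triple (x y : ℝ) :
    (Real.cosh x)^2 + (Real.cosh y)^2 + (Real.cosh (x-y))^2
      - 2 * Real.cosh x * Real.cosh y * Real.cosh (x-y) = 1 := by
  rw [Real.cosh_sub]
  nlinarith [Real.cosh_sq x, Real.cosh_sq y, Real.sinh_sq x, Real.sinh_sq y]

lemma eta_sub_left (X Y Z : ℝ × E d) : eta (X - Y) Z = eta X Z - eta Y Z := by
  simp only [eta, Prod.fst_sub, Prod.snd_sub, inner_sub_left]; ring

lemma eta_add_left (X Y Z : ℝ × E d) : eta (X + Y) Z = eta X Z + eta Y Z := by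
  simp only [eta, Prod.fst_add, Prod.snd_add, inner_add_left]; ring

lemma eta_smul_left (r : ℝ) (X Y : ℝ × E d) : eta (r • X) Y = r * eta X Y := by
  simp only [eta, Prod.smul_fst, Prod.smul_snd, real_inner_smul_left, smul_eq_mul]; ring

lemma eta_sub_right (X Y Z : ℝ × E d) : eta X (Y - Z) = eta X Y - eta X Z := by
  rw [eta_comm, eta_sub_left, eta_comm Y X, eta_comm Z X]

lemma eta_add_right (X Y Z : ℝ × E d) : eta X (Y + Z) = eta X Y + eta X Z := by
  rw [eta_comm, eta_add_left, eta_comm Y X, eta_comm Z X]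

lemma eta_smul_right (r : ℝ) (X Y : ℝ × E d) : eta X (r • Y) = r * eta X Y := by
  rw [eta_comm, eta_smul_left, eta_comm Y X]

lemma eta_comb (r₁ r₂ : ℝ) (A B : ℝ × E d) :
    eta (r₁ • A + r₂ • B) (r₁ • A + r₂ • B)
      = r₁^2 * eta A A + 2*r₁*r₂ * eta A B + r₂^2 * eta B B := by
  simp only [eta_add_left, eta_add_right, eta_smul_left, eta_smul_right]
  rw [eta_comm B A]
  ring

/-- A vector `eta`-orthogonal to a unit timelike vector, with zero self-product, is zero. -/
lemma eq_zero_of_null_orth {X W : ℝ × E d} (hX : eta X X = 1)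
    (hWX : eta W X = 0) (hWW : eta W W = 0) : W = 0 := by
  have hX' : X.1 * X.1 - ⟪X.2, X.2⟫ = 1 := hX
  have hWX' : W.1 * X.1 - ⟪W.2, X.2⟫ = 0 := hWX
  have hWW' : W.1 * W.1 - ⟪W.2, W.2⟫ = 0 := hWW
  have hCS : ⟪W.2, X.2⟫ * ⟪W.2, X.2⟫ ≤ ⟪W.2, W.2⟫ * ⟪X.2, X.2⟫ :=
    real_inner_mul_inner_self_le _ _
  have e1 : ⟪W.2, X.2⟫ = W.1 * X.1 := by linarith
  have e2 : ⟪W.2, W.2⟫ = W.1 * W.1 := by linarith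
  have e3 : ⟪X.2, X.2⟫ = X.1 * X.1 - 1 := by linarith
  rw [e1, e2, e3] at hCS
  have hW1 : W.1 = 0 := by nlinarith
  have hW2 : W.2 = 0 := by
    rw [← real_inner_self_nonpos, e2, hW1]
    simp
  rw [Prod.ext_iff]
  exact ⟨hW1, hW2⟩

/-- Rigidity: three unit timelike vectors satisfying the geodesic Gram identity are
linearly dependent. -/
lemma mem_span_of_identity {X Y Z : ℝ × E d} (hX : eta X X = 1) (hY : eta Y Y = 1)
    (hZ : eta Z Z = 1) (hc : 1 < eta X Y)
    (hid : eta X Z ^ 2 + eta Y Z ^ 2 + eta X Y ^ 2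
      - 2 * eta X Z * eta Y Z * eta X Y = 1) :
    ∃ l m : ℝ, Z = l • X + m • Y := by
  set a := eta X Z with ha
  set b := eta Y Z with hb
  set c := eta X Y with hcc
  have hc2 : 1 - c^2 ≠ 0 := by nlinarith
  set l := (a - b*c)/(1 - c^2) with hl
  set m := (b - a*c)/(1 - c^2) with hm
  set W := Z - l • X - m • Y with hW
  have hZX : eta Z X = a := by rw [ha, eta_comm]
  have hZY : eta Z Y = b := by rw [hb, eta_comm]
  have hYX : eta Y X = c := by rw [hcc, eta_comm]
  have hWX : eta W X = 0 := by
    rw [hW, eta_sub_left, eta_sub_left, eta_smul_left, eta_smul_left, hX, hYX, hZX, hl, hm]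
    field_simp
    ring
  have hWY : eta W Y = 0 := by
    rw [hW, eta_sub_left, eta_sub_left, eta_smul_left, eta_smul_left, hY, ← hcc, hZY, hl, hm]
    field_simp
    ring
  have hWW : eta W W = 0 := by
    have h1 : eta W W = eta W Z - l * eta W X - m * eta W Y := by
      conv_lhs => rw [hW]
      rw [eta_sub_right W (Z - l • X) (m • Y), eta_sub_right W Z (l • X),
        eta_smul_right, eta_smul_right]
      try ring
    have h2 : eta W Z = 1 - l * a - m * b := by
      rw [hW, eta_sub_left, eta_sub_left, eta_smul_left, eta_smul_left, hZ, ← ha, ← hb]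
      try rw [eta_comm Z X, ← ha]
      try rw [eta_comm Z Y, ← hb]
      try ring
    rw [h1, hWX, hWY, h2]
    have h3 : l * a + m * b = 1 := by
      rw [hl, hm]
      field_simp
      linear_combination hid
    linarith
  have hW0 : W = 0 := eq_zero_of_null_orth hX hWX hWW
  refine ⟨l, m, ?_⟩
  have h4 : Z - (l • X + m • Y) = 0 := by rw [← sub_sub]; exact hW0
  exact sub_eq_zero.mp h4

/-- Inverse of the hyperboloid lift. -/
lemma unlift {Z : ℝ × E d} (h1 : eta Z Z = 1) (h0 : 0 < Z.1) :
    ((1 + Z.1)⁻¹ • Z.2) ∈ pball d ∧ lft ((1 + Z.1)⁻¹ • Z.2) = Z := by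
  set t := Z.1 with hT
  set v := Z.2 with hV
  have ht1 : (0:ℝ) < 1 + t := by linarith
  have hv : ‖v‖^2 = t^2 - 1 := by
    have h1' : t * t - ⟪v, v⟫ = 1 := h1
    rw [real_inner_self_eq_norm_sq] at h1'
    nlinarith
  have hz : ‖(1 + t)⁻¹ • v‖^2 = (t-1)/(t+1) := by
    rw [norm_smul, mul_pow, hv]
    rw [Real.norm_eq_abs, abs_of_pos (inv_pos.mpr ht1)]
    field_simp
    ring
  have hzlt : ‖(1 + t)⁻¹ • v‖^2 < 1 := by
    rw [hz, div_lt_one (by linarith)]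
    linarith
  have hmem : ((1 + t)⁻¹ • v) ∈ pball d := by
    have := norm_nonneg ((1 + t)⁻¹ • v)
    show ‖(1 + t)⁻¹ • v‖ < 1
    nlinarith
  refine ⟨hmem, ?_⟩
  have hden : 1 - ‖(1 + t)⁻¹ • v‖^2 = 2/(1+t) := by
    rw [hz]
    field_simp
    ring
  rw [Prod.ext_iff]
  constructor
  · show (1 + ‖(1 + t)⁻¹ • v‖^2)/(1 - ‖(1 + t)⁻¹ • v‖^2) = t
    rw [hden, hz]
    rw [div_eq_iff (by positivity)]
    field_simp
    ring
  · show (2/(1 - ‖(1 + t)⁻¹ • v‖^2)) • ((1 + t)⁻¹ • v) = v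
    rw [hden]
    rw [smul_smul]
    rw [show 2 / (2 / (1 + t)) * (1 + t)⁻¹ = 1 by field_simp]
    rw [one_smul]

lemma lft_fst_pos {x : E d} (hx : x ∈ pball d) : 0 < (lft x).1 := by
  have := pos_of_pball hx
  show 0 < (1 + ‖x‖^2)/(1 - ‖x‖^2)
  positivity

lemma lft_inj {x y : E d} (hx : x ∈ pball d) (hy : y ∈ pball d) (h : lft x = lft y) :
    x = y := by
  have hx' := pos_of_pball hx
  have hy' := pos_of_pball hy
  have h1 : (1 + ‖x‖^2)/(1 - ‖x‖^2) = (1 + ‖y‖^2)/(1 - ‖y‖^2) := congrArg Prod.fst h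
  have h2 : (2/(1 - ‖x‖^2)) • x = (2/(1 - ‖y‖^2)) • y := congrArg Prod.snd h
  have hn : ‖x‖^2 = ‖y‖^2 := by
    rw [div_eq_div_iff (by linarith) (by linarith)] at h1
    nlinarith
  rw [hn] at h2
  have hs : (2/(1 - ‖y‖^2)) ≠ 0 := by positivity
  exact smul_right_injective (E d) hs h2

/-- The geodesic through `u` with ideal endpoint `p`: ball points whose lift lies in
the plane spanned by `lft u` and `(1, p)`. -/
def Lset (p u : E d) : Set (E d) :=
  {z | z ∈ pball d ∧ ∃ l m : ℝ, lft z = l • lft u + m • ((1 : ℝ), p)}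

lemma self_mem_Lset {p u : E d} (hu : u ∈ pball d) : u ∈ Lset p u :=
  ⟨hu, 1, 0, by simp⟩

lemma totGeodesic_Lset {p u : E d} (hu : u ∈ pball d) : TotGeodesic (Lset p u) := by
  constructor
  · intro z hz; exact hz.1
  · rintro z₁ hz₁ z₂ hz₂ hne c ⟨γ, ⟨hγball, hγdist⟩, rfl⟩ hc₁ hc₂ w hw
    obtain ⟨s₁, rfl⟩ := hc₁
    obtain ⟨s₂, rfl⟩ := hc₂
    obtain ⟨t, rfl⟩ := hw
    have hb1 := hγball s₁
    have hb2 := hγball s₂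
    have hbt := hγball t
    have key : ∀ s t : ℝ, eta (lft (γ s)) (lft (γ t)) = Real.cosh (s - t) := by
      intro s t
      have h1 : dH (γ s) (γ t) = |s - t| := hγdist s t
      rw [dH_lft (hγball s) (hγball t)] at h1
      have h2 := one_le_eta_lft (hγball s) (hγball t)
      have h3 := congrArg Real.cosh h1
      rwa [cosh_arcosh h2, Real.cosh_abs] at h3
    have hgt : 1 < eta (lft (γ s₁)) (lft (γ s₂)) := one_lt_eta_lft hb1 hb2 hne
    have hid : eta (lft (γ s₁)) (lft (γ t)) ^ 2 + eta (lft (γ s₂)) (lft (γ t)) ^ 2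
        + eta (lft (γ s₁)) (lft (γ s₂)) ^ 2
        - 2 * eta (lft (γ s₁)) (lft (γ t)) * eta (lft (γ s₂)) (lft (γ t))
            * eta (lft (γ s₁)) (lft (γ s₂)) = 1 := by
      rw [key s₁ t, key s₂ t, key s₁ s₂]
      have h4 := cosh_triple (s₁ - t) (s₂ - t)
      rw [show s₁ - t - (s₂ - t) = s₁ - s₂ by ring] at h4
      linarith
    obtain ⟨l, m, hlm⟩ := mem_span_of_identity (eta_lft_self hb1) (eta_lft_self hb2)
      (eta_lft_self hbt) hgt hid
    obtain ⟨hz₁b, l₁, m₁, h₁⟩ := hz₁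
    obtain ⟨hz₂b, l₂, m₂, h₂⟩ := hz₂
    refine ⟨hbt, l * l₁ + m * l₂, l * m₁ + m * m₂, ?_⟩
    rw [hlm, h₁, h₂]
    rw [smul_add, smul_add, smul_smul, smul_smul, smul_smul, smul_smul, add_smul, add_smul]
    abel

lemma vec_rearrange (r sc mu : ℝ) (A q : E d) :
    q - r • (sc • A + mu • q) = (1 - r*mu) • q - (r*sc) • A := by
  rw [smul_add, smul_smul, smul_smul, sub_smul, one_smul]
  abel

lemma mem_closure_Lset {p u : E d} (hp : ‖p‖ = 1) (hu : u ∈ pball d) :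
    p ∈ closure (Lset p u) := by
  rw [Metric.mem_closure_iff]
  intro ε hε
  obtain ⟨α, hα⟩ : ∃ α : ℝ, α = eta (lft u) ((1 : ℝ), p) := ⟨_, rfl⟩
  have hαpos : 0 < α := hα ▸ eta_lft_P_pos hp hu
  have hU₀ : 0 < (lft u).1 := lft_fst_pos hu
  obtain ⟨C, hC⟩ : ∃ C : ℝ, C = ‖(lft u).2‖ + 1 + (lft u).1 := ⟨_, rfl⟩
  have hCpos : 0 < C := by
    rw [hC]; positivity
  obtain ⟨s, hs⟩ : ∃ s : ℝ, s = min (1/2 : ℝ) (ε / (8 * α * C)) := ⟨_, rfl⟩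
  have hspos : 0 < s := by
    rw [hs]; exact lt_min (by norm_num) (by positivity)
  have hs2 : s ≤ 1/2 := hs ▸ min_le_left _ _
  have hsε : s ≤ ε / (8 * α * C) := hs ▸ min_le_right _ _
  have h14 : (8 * s * α / 3) * C ≤ ε / 3 := by
    have h16 : s * (8 * α * C) ≤ ε := (le_div_iff₀ (by positivity)).mp hsε
    nlinarith
  obtain ⟨μ, hμ⟩ : ∃ μ : ℝ, μ = (1 - s^2)/(2*s*α) := ⟨_, rfl⟩
  have hμpos : 0 < μ := by
    rw [hμ]; exact div_pos (by nlinarith) (by positivity)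
  obtain ⟨Z, hZ⟩ : ∃ Z : ℝ × E d, Z = s • lft u + μ • ((1 : ℝ), p) := ⟨_, rfl⟩
  have hZ1 : Z.1 = s * (lft u).1 + μ := by
    rw [hZ]
    show s * (lft u).1 + μ * 1 = s * (lft u).1 + μ
    ring
  have hZ2 : Z.2 = s • (lft u).2 + μ • p := by rw [hZ]; rfl
  have hZpos : 0 < Z.1 := by
    rw [hZ1]; positivity
  have hZZ : eta Z Z = 1 := by
    rw [hZ, eta_comb, eta_lft_self hu, eta_PP hp, ← hα, hμ]
    field_simp
    ring
  obtain ⟨hzball, hzlift⟩ := unlift hZZ hZpos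
  refine ⟨(1 + Z.1)⁻¹ • Z.2, ⟨hzball, s, μ, by rw [hzlift, hZ]⟩, ?_⟩
  have hr : (0:ℝ) < 1 + Z.1 := by linarith
  have hpz : p - (1 + Z.1)⁻¹ • Z.2
      = ((1 + Z.1)⁻¹ * (1 + s * (lft u).1)) • p - ((1 + Z.1)⁻¹ * s) • (lft u).2 := by
    rw [hZ2, vec_rearrange]
    congr 1
    rw [show (1:ℝ) - (1 + Z.1)⁻¹ * μ = (1 + Z.1)⁻¹ * ((1 + Z.1) - μ) by
      rw [mul_sub, inv_mul_cancel₀ (ne_of_gt hr)]]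
    rw [hZ1]
    ring_nf
  have hnorm : ‖p - (1 + Z.1)⁻¹ • Z.2‖ ≤ (1 + Z.1)⁻¹ * C := by
    rw [hpz]
    have h5 := norm_sub_le (((1 + Z.1)⁻¹ * (1 + s * (lft u).1)) • p)
      (((1 + Z.1)⁻¹ * s) • (lft u).2)
    have h6 : ‖((1 + Z.1)⁻¹ * (1 + s * (lft u).1)) • p‖
        = (1 + Z.1)⁻¹ * (1 + s * (lft u).1) := by
      rw [norm_smul, Real.norm_eq_abs, hp, mul_one, abs_of_pos (by positivity)]
    have h7 : ‖((1 + Z.1)⁻¹ * s) • (lft u).2‖ = (1 + Z.1)⁻¹ * s * ‖(lft u).2‖ := by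
      rw [norm_smul, Real.norm_eq_abs, abs_of_pos (by positivity)]
    have h8 : (1 + s * (lft u).1) + s * ‖(lft u).2‖ ≤ C := by
      rw [hC]
      have := norm_nonneg (lft u).2
      nlinarith
    have hrinv : (0:ℝ) < (1 + Z.1)⁻¹ := inv_pos.mpr hr
    calc ‖((1 + Z.1)⁻¹ * (1 + s * (lft u).1)) • p - ((1 + Z.1)⁻¹ * s) • (lft u).2‖
        ≤ (1 + Z.1)⁻¹ * (1 + s * (lft u).1) + (1 + Z.1)⁻¹ * s * ‖(lft u).2‖ := by
          rw [h6, h7] at h5; exact h5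
      _ = (1 + Z.1)⁻¹ * ((1 + s * (lft u).1) + s * ‖(lft u).2‖) := by ring
      _ ≤ (1 + Z.1)⁻¹ * C := by
          exact mul_le_mul_of_nonneg_left h8 (le_of_lt hrinv)
  have hinv : (1 + Z.1)⁻¹ ≤ 8 * s * α / 3 := by
    have h9 : μ ≤ 1 + Z.1 := by rw [hZ1]; nlinarith
    have h10 : (1 + Z.1)⁻¹ ≤ μ⁻¹ := by
      apply inv_anti₀ hμpos h9
    have h11 : μ⁻¹ = 2*s*α/(1 - s^2) := by
      rw [hμ, inv_div]
    have h12 : (3:ℝ)/4 ≤ 1 - s^2 := by nlinarith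
    have h13 : 2*s*α/(1 - s^2) ≤ 2*s*α/(3/4) := by
      apply div_le_div_of_nonneg_left (by positivity) (by norm_num) h12
    rw [h11] at h10
    calc (1 + Z.1)⁻¹ ≤ 2*s*α/(1 - s^2) := h10
      _ ≤ 2*s*α/(3/4) := h13
      _ = 8*s*α/3 := by ring
  rw [dist_eq_norm]
  have h17 : (1 + Z.1)⁻¹ * C ≤ (8 * s * α / 3) * C :=
    mul_le_mul_of_nonneg_right hinv (le_of_lt hCpos)
  have h18 : (0:ℝ) < ε/3 + (ε/3 + ε/3) - ε + ε/3 := by linarith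
  linarith [hnorm, h17, h14, hε]

lemma GH_subset_Lset {p u : E d} (hp : ‖p‖ = 1) (hu : u ∈ pball d) :
    GH {u, p} ⊆ Lset p u := by
  apply sInter_subset_of_mem
  refine ⟨totGeodesic_Lset hu, ?_, ?_⟩
  · rintro z ⟨hz1, hz2⟩
    rcases hz1 with rfl | rfl
    · exact self_mem_Lset hu
    · exact absurd (show ‖z‖ < 1 from hz2) (by rw [hp]; exact lt_irrefl 1)
  · rintro z (rfl | rfl)
    · exact subset_closure (self_mem_Lset hu)
    · exact mem_closure_Lset hp hu

lemma dH_self (u : E d) : dH u u = 0 := by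
  have h : (1 : ℝ) + 2 * ‖u - u‖^2 / ((1 - ‖u‖^2) * (1 - ‖u‖^2)) = 1 := by
    simp
  rw [dH, h, arcosh_one]

lemma dist_eq_busemann {p : E d} (hp : ‖p‖ = 1) {u v : E d} (hu : u ∈ pball d)
    (hv : v ∈ pball d) (l m : ℝ) (hlm : lft v = l • lft u + m • ((1 : ℝ), p)) :
    dH u v = |busemann p u - busemann p v| := by
  by_cases hne : v = u
  · subst hne
    rw [sub_self, abs_zero, dH_self]
  · set α := eta (lft u) ((1 : ℝ), p) with hα
    set β := eta (lft v) ((1 : ℝ), p) with hβ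
    have hαpos : 0 < α := eta_lft_P_pos hp hu
    have hβpos : 0 < β := eta_lft_P_pos hp hv
    set c := eta (lft u) (lft v) with hc
    have hcgt : 1 < c := one_lt_eta_lft hu hv (fun h => hne h.symm)
    have hβeq : β = l * α := by
      rw [hβ, hlm, eta_add_left, eta_smul_left, eta_smul_left, eta_PP hp, ← hα]
      ring
    have hceq : c = l + m * α := by
      rw [hc, eta_comm, hlm, eta_add_left, eta_smul_left, eta_smul_left,
        eta_lft_self hu, eta_comm ((1 : ℝ), p) (lft u), ← hα]
      ring
    have hvv : l * l + 2 * (l * m) * α = 1 := by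
      have h1 : eta (lft v) (lft v) = 1 := eta_lft_self hv
      rw [hlm, eta_comb, eta_lft_self hu, eta_PP hp, ← hα] at h1
      nlinarith [h1]
    have hkey : α^2 + β^2 - 2 * α * β * c = 0 := by
      rw [hβeq, hceq]
      nlinarith [hvv]
    have hcosh : Real.cosh (Real.log α - Real.log β) = c := by
      rw [Real.cosh_eq, Real.exp_sub, Real.exp_log hαpos, Real.exp_log hβpos,
        neg_sub, Real.exp_sub, Real.exp_log hαpos, Real.exp_log hβpos]
      rw [div_add_div _ _ (ne_of_gt hβpos) (ne_of_gt hαpos)]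
      rw [div_div]
      rw [div_eq_iff (by positivity)]
      nlinarith [hkey]
    rw [dH_lft hu hv, ← hc, ← hcosh, arcosh_cosh,
      busemann_eta hp hu, busemann_eta hp hv, ← hα, ← hβ]

lemma dist_eq_busemann_of_mem_Lset {p b : E d} (hp : ‖p‖ = 1) {w₁ w₂ : E d}
    (h₁ : w₁ ∈ Lset p b) (h₂ : w₂ ∈ Lset p b) :
    dH w₁ w₂ = |busemann p w₁ - busemann p w₂| := by
  obtain ⟨hb₁, l₁, m₁, e₁⟩ := h₁
  obtain ⟨hb₂, l₂, m₂, e₂⟩ := h₂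
  have hl₁ : l₁ ≠ 0 := by
    intro h0
    rw [h0, zero_smul, zero_add] at e₁
    have h1 : eta (lft w₁) (lft w₁) = 1 := eta_lft_self hb₁
    rw [e₁, eta_smul_left, eta_smul_right, eta_PP hp] at h1
    simp at h1
  apply dist_eq_busemann hp hb₁ hb₂ (l₂/l₁) (m₂ - l₂*m₁/l₁)
  rw [e₂]
  conv_rhs => rw [e₁]
  match_scalars
  all_goals field_simp
  all_goals ring

end HoroAux

/-- If `p` is an ideal point, `b` a base point with `b ∉ GH(p)`, and
`π` is the horospherical projection onto the geodesic `GH(b,p)` (the unique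
intersection point of `GH(b,p)` with the horosphere `S(p,x)`), then for every
`x ∈ ℍ^d` and every `y` on the geodesic `GH(x,p)`, projected distances are preserved:
`d_ℍ(π x, π y) = d_ℍ(x, y)`. -/
theorem horo_proj_preserves_dist_along_direction
    {d : ℕ} (b p : E d) (hb : b ∈ pball d) (hp : ‖p‖ = 1)
    (hbp : b ∉ GH {p})
    (π : E d → E d)
    (hπ : ∀ x ∈ pball d, GH {b, p} ∩ horosphere p x = {π x}) :
    ∀ x ∈ pball d, ∀ y ∈ pball d, y ∈ GH {x, p} → dH (π x) (π y) = dH x y := by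
  intro x hx y hy hGH
  have hπx : π x ∈ GH {b, p} ∩ horosphere p x := by
    rw [hπ x hx]; exact mem_singleton _
  have hπy : π y ∈ GH {b, p} ∩ horosphere p y := by
    rw [hπ y hy]; exact mem_singleton _
  have hπxL : π x ∈ HoroAux.Lset p b := HoroAux.GH_subset_Lset hp hb hπx.1
  have hπyL : π y ∈ HoroAux.Lset p b := HoroAux.GH_subset_Lset hp hb hπy.1
  have hBx : busemann p (π x) = busemann p x := hπx.2.2
  have hBy : busemann p (π y) = busemann p y := hπy.2.2
  have h1 : dH (π x) (π y) = |busemann p (π x) - busemann p (π y)| :=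
    HoroAux.dist_eq_busemann_of_mem_Lset hp hπxL hπyL
  obtain ⟨_, l, m, e⟩ := HoroAux.GH_subset_Lset hp hx hGH
  have h2 : dH x y = |busemann p x - busemann p y| :=
    HoroAux.dist_eq_busemann hp hx hy l m e
  rw [h1, h2, hBx, hBy]
end
end

section
/- Horospherical projections are base-point independent up to isometry of the image: for any two base points b, b′ ∈ ℍ^d (each not lying in the geodesic hull of p_1,…,p_K) and any x, y ∈ ℍ^d, one has d_ℍ(π^H_{b,p_1,…,p_K}(x), π^H_{b,p_1,…,p_K}(y)) = d_ℍ(π^H_{b′,p_1,…,p_K}(x), π^H_{b′,p_1,…,p_K}(y)). -/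
noncomputable section

open Set

/-!
Lift the ball to the upper sheet of the hyperboloid `⟪X, X⟫ = -1` in Minkowski space `ℝ × ℝ^d`,
`x ↦ x̂`. Then `cosh d_ℍ(x, y) = -⟪x̂, ŷ⟫`, an ideal point `q` becomes the null vector `(1, q)`
with `e^{B_q(x)} = -⟪x̂, (1, q)⟫`, and geodesic hulls become traces of linear spans: `M` is cut
out by `ℝ b̂ ⊕ V`, where `V` is spanned by the null vectors of the `p_i`, and `S(x)` by the
equations `⟪·, v⟫ = ⟪x̂, v⟫` for `v ∈ V`.

If two of the `p_i` differ, `V` contains a timelike vector, so `ℝ × ℝ^d = V ⊕ V^⊥`. With `N` the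
projection onto `V` and `n = b̂ - N b̂` (spacelike as `b ∉ P`), the projection of `x` lifts to
`N x̂ + s n`; minimality forces `s ≥ 0` and the hyperboloid equation fixes `s`, so that
`⟪π̂ x, π̂ y⟫ = ⟪N x̂, N ŷ⟫ + √(-1 - ⟪N x̂, N x̂⟫) √(-1 - ⟪N ŷ, N ŷ⟫)` does not involve `b`.
If all `p_i` equal `q`, `M` is the geodesic from `b` to `q` and
`d_ℍ(π x, π y) = |B_q(x) - B_q(y)|`.
-/

section

open Filter Topology Real
open Submodule (span)

variable {d : ℕ}

def minkowski : LinearMap.BilinForm ℝ (ℝ × E d) :=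
  LinearMap.mk₂ ℝ (fun X Y => inner ℝ X.2 Y.2 - X.1 * Y.1)
    (fun X X' Y => by simp only [Prod.fst_add, Prod.snd_add, inner_add_left]; ring)
    (fun c X Y => by
      simp only [Prod.smul_fst, Prod.smul_snd, real_inner_smul_left, smul_eq_mul]; ring)
    (fun X Y Y' => by simp only [Prod.fst_add, Prod.snd_add, inner_add_right]; ring)
    (fun c X Y => by
      simp only [Prod.smul_fst, Prod.smul_snd, real_inner_smul_right, smul_eq_mul]; ring)

lemma minkowski_apply (X Y : ℝ × E d) : minkowski X Y = inner ℝ X.2 Y.2 - X.1 * Y.1 := rfl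

lemma minkowski_comm (X Y : ℝ × E d) : minkowski X Y = minkowski Y X := by
  rw [minkowski_apply, minkowski_apply, real_inner_comm, mul_comm]

lemma minkowski_isRefl : (minkowski : LinearMap.BilinForm ℝ (ℝ × E d)).IsRefl :=
  fun X Y h => by rwa [minkowski_comm]

lemma minkowski_self (X : ℝ × E d) : minkowski X X = ‖X.2‖ ^ 2 - X.1 ^ 2 := by
  rw [minkowski_apply, real_inner_self_eq_norm_sq]; ring

lemma minkowski_self_pos_of_orthogonal {X Y : ℝ × E d} (hY : minkowski Y Y < 0)
    (hXY : minkowski X Y = 0) (hX : X ≠ 0) : 0 < minkowski X X := by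
  rw [minkowski_self] at hY ⊢
  rw [minkowski_apply, sub_eq_zero] at hXY
  have hY1 : 0 < Y.1 ^ 2 := by nlinarith [sq_nonneg ‖Y.2‖]
  have hX2 : X.2 ≠ 0 := by
    rintro h
    rw [h, inner_zero_left, eq_comm, mul_eq_zero] at hXY
    exact hX (Prod.ext (hXY.resolve_right (by rintro h; simp [h] at hY1)) h)
  have hcs : inner ℝ X.2 Y.2 ^ 2 ≤ ‖X.2‖ ^ 2 * ‖Y.2‖ ^ 2 := by
    rw [← mul_pow]
    exact sq_le_sq' (neg_le_of_abs_le (abs_real_inner_le_norm _ _)) (real_inner_le_norm _ _)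
  have : ‖X.2‖ ^ 2 * ‖Y.2‖ ^ 2 < ‖X.2‖ ^ 2 * Y.1 ^ 2 :=
    mul_lt_mul_of_pos_left (by linarith) (by positivity)
  have : X.1 ^ 2 * Y.1 ^ 2 < ‖X.2‖ ^ 2 * Y.1 ^ 2 := by rw [← mul_pow, ← hXY]; linarith
  nlinarith

lemma eq_zero_of_orthogonal_of_timelike {X Y : ℝ × E d} (hY : minkowski Y Y < 0)
    (hXY : minkowski X Y = 0) (hXX : minkowski X X ≤ 0) : X = 0 := by
  by_contra hX
  exact hXX.not_gt (minkowski_self_pos_of_orthogonal hY hXY hX)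

lemma minkowski_lt_zero {X Y : ℝ × E d} (hX : ‖X.2‖ < X.1) (hY : ‖Y.2‖ < Y.1) :
    minkowski X Y < 0 := by
  have := real_inner_le_norm X.2 Y.2
  have := mul_lt_mul'' hX hY (norm_nonneg _) (norm_nonneg _)
  rw [minkowski_apply]
  linarith

lemma minkowski_self_lt_zero {X : ℝ × E d} (hX : ‖X.2‖ < X.1) : minkowski X X < 0 :=
  minkowski_lt_zero hX hX

lemma fst_pos_of_minkowski_lt_zero {X Y : ℝ × E d} (hX : minkowski X X ≤ 0) (hY : ‖Y.2‖ ≤ Y.1)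
    (hXY : minkowski X Y < 0) : 0 < X.1 := by
  by_contra! hX1
  have hX2 : ‖X.2‖ ≤ -X.1 := by
    rw [minkowski_self] at hX
    exact (sq_le_sq₀ (norm_nonneg _) (by linarith)).1 (by nlinarith)
  have := neg_le_of_abs_le (abs_real_inner_le_norm X.2 Y.2)
  have := mul_le_mul hX2 hY (norm_nonneg _) (by linarith)
  rw [minkowski_apply] at hXY
  nlinarith

def toHyperboloid (x : E d) : ℝ × E d :=
  ((1 + ‖x‖ ^ 2) / (1 - ‖x‖ ^ 2), (2 / (1 - ‖x‖ ^ 2)) • x)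

def ofHyperboloid (X : ℝ × E d) : E d := (1 + X.1)⁻¹ • X.2

def OnHyperboloid (X : ℝ × E d) : Prop := minkowski X X = -1 ∧ 0 < X.1

lemma one_sub_norm_sq_pos {x : E d} (hx : x ∈ pball d) : 0 < 1 - ‖x‖ ^ 2 := by
  have : ‖x‖ < 1 := hx
  nlinarith [norm_nonneg x]

lemma minkowski_toHyperboloid {x y : E d} (hx : x ∈ pball d) (hy : y ∈ pball d) :
    minkowski (toHyperboloid x) (toHyperboloid y) =
      -(1 + 2 * ‖x - y‖ ^ 2 / ((1 - ‖x‖ ^ 2) * (1 - ‖y‖ ^ 2))) := by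
  have := (one_sub_norm_sq_pos hx).ne'
  have := (one_sub_norm_sq_pos hy).ne'
  rw [minkowski_apply, toHyperboloid, toHyperboloid, real_inner_smul_left, real_inner_smul_right,
    norm_sub_sq_real]
  field_simp
  ring

lemma one_le_neg_minkowski_toHyperboloid {x y : E d} (hx : x ∈ pball d) (hy : y ∈ pball d) :
    1 ≤ -minkowski (toHyperboloid x) (toHyperboloid y) := by
  have := one_sub_norm_sq_pos hx
  have := one_sub_norm_sq_pos hy
  rw [minkowski_toHyperboloid hx hy, neg_neg, le_add_iff_nonneg_right]
  positivity

lemma one_lt_neg_minkowski_toHyperboloid {x y : E d} (hx : x ∈ pball d) (hy : y ∈ pball d)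
    (hxy : x ≠ y) : 1 < -minkowski (toHyperboloid x) (toHyperboloid y) := by
  have := one_sub_norm_sq_pos hx
  have := one_sub_norm_sq_pos hy
  have := norm_pos_iff.2 (sub_ne_zero.2 hxy)
  rw [minkowski_toHyperboloid hx hy, neg_neg, lt_add_iff_pos_right]
  positivity

lemma dH_eq_arcosh_neg_minkowski {x y : E d} (hx : x ∈ pball d) (hy : y ∈ pball d) :
    dH x y = Real.arcosh (-minkowski (toHyperboloid x) (toHyperboloid y)) := by
  rw [minkowski_toHyperboloid hx hy, neg_neg]
  rfl

lemma dH_lt_dH_iff {c u z : E d} (hc : c ∈ pball d) (hu : u ∈ pball d) (hz : z ∈ pball d) :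
    dH c u < dH c z ↔ minkowski (toHyperboloid c) (toHyperboloid z) <
      minkowski (toHyperboloid c) (toHyperboloid u) := by
  rw [dH_eq_arcosh_neg_minkowski hc hu, dH_eq_arcosh_neg_minkowski hc hz,
    Real.arcosh_lt_arcosh (by linarith [one_le_neg_minkowski_toHyperboloid hc hu])
      (by linarith [one_le_neg_minkowski_toHyperboloid hc hz]), neg_lt_neg_iff]

lemma onHyperboloid_toHyperboloid {x : E d} (hx : x ∈ pball d) :
    OnHyperboloid (toHyperboloid x) :=
  ⟨by rw [minkowski_toHyperboloid hx hx]; simp,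
    div_pos (by positivity) (one_sub_norm_sq_pos hx)⟩

lemma OnHyperboloid.norm_sq_snd {X : ℝ × E d} (hX : OnHyperboloid X) :
    ‖X.2‖ ^ 2 = X.1 ^ 2 - 1 := by
  linarith [minkowski_self X, hX.1]

lemma OnHyperboloid.norm_snd_lt_fst {X : ℝ × E d} (hX : OnHyperboloid X) : ‖X.2‖ < X.1 :=
  (sq_lt_sq₀ (norm_nonneg _) hX.2.le).1 (by linarith [hX.norm_sq_snd])

lemma OnHyperboloid.ofHyperboloid_mem {X : ℝ × E d} (hX : OnHyperboloid X) :
    ofHyperboloid X ∈ pball d := by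
  have h := hX.norm_snd_lt_fst
  show ‖(1 + X.1)⁻¹ • X.2‖ < 1
  rw [norm_smul, Real.norm_of_nonneg (inv_nonneg.2 (by linarith [hX.2])),
    inv_mul_lt_iff₀ (by linarith [hX.2])]
  linarith

lemma OnHyperboloid.toHyperboloid_ofHyperboloid {X : ℝ × E d} (hX : OnHyperboloid X) :
    toHyperboloid (ofHyperboloid X) = X := by
  have h0 : 0 < 1 + X.1 := by linarith [hX.2]
  have h1 : X.1 + 1 ≠ 0 := by linarith [hX.2]
  have hnorm : ‖ofHyperboloid X‖ ^ 2 = (X.1 - 1) / (X.1 + 1) := by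
    rw [ofHyperboloid, norm_smul, mul_pow, Real.norm_of_nonneg (inv_nonneg.2 h0.le),
      hX.norm_sq_snd]
    field_simp
    ring
  have hden : 1 - ‖ofHyperboloid X‖ ^ 2 = 2 / (X.1 + 1) := by
    rw [hnorm]; field_simp; ring
  refine Prod.ext ?_ ?_
  · show (1 + ‖ofHyperboloid X‖ ^ 2) / (1 - ‖ofHyperboloid X‖ ^ 2) = X.1
    rw [hden, hnorm]
    field_simp
    ring
  · show (2 / (1 - ‖ofHyperboloid X‖ ^ 2)) • ((1 + X.1)⁻¹ • X.2) = X.2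
    rw [hden, smul_smul]
    convert one_smul ℝ X.2 using 2
    field_simp
    ring

lemma ofHyperboloid_toHyperboloid {x : E d} (hx : x ∈ pball d) :
    ofHyperboloid (toHyperboloid x) = x := by
  have := (one_sub_norm_sq_pos hx).ne'
  rw [ofHyperboloid, toHyperboloid, smul_smul]
  convert one_smul ℝ x using 2
  field_simp
  ring

lemma toHyperboloid_injOn : InjOn (toHyperboloid (d := d)) (pball d) :=
  LeftInvOn.injOn fun _ hx => ofHyperboloid_toHyperboloid hx

lemma eq_of_toHyperboloid_eq_smul {z w : E d} {r : ℝ} (hz : z ∈ pball d) (hw : w ∈ pball d)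
    (h : toHyperboloid z = r • toHyperboloid w) : z = w := by
  obtain ⟨hz1, hz2⟩ := onHyperboloid_toHyperboloid hz
  obtain ⟨hw1, hw2⟩ := onHyperboloid_toHyperboloid hw
  simp only [h, map_smul, LinearMap.smul_apply, hw1, smul_eq_mul] at hz1
  rw [h, Prod.smul_fst, smul_eq_mul] at hz2
  have hr : r = 1 := by nlinarith [pos_of_mul_pos_left hz2 hw2.le]
  rw [hr, one_smul] at h
  exact toHyperboloid_injOn hz hw h

lemma norm_snd_smul_toHyperboloid_lt {r : ℝ} (hr : 0 < r) {w : E d} (hw : w ∈ pball d) :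
    ‖(r • toHyperboloid w).2‖ < (r • toHyperboloid w).1 := by
  rw [Prod.smul_snd, Prod.smul_fst, norm_smul, Real.norm_of_nonneg hr.le, smul_eq_mul]
  exact mul_lt_mul_of_pos_left (onHyperboloid_toHyperboloid hw).norm_snd_lt_fst hr

lemma exists_pos_smul_toHyperboloid {X : ℝ × E d} (hX : ‖X.2‖ < X.1) :
    ∃ r : ℝ, 0 < r ∧ ∃ z ∈ pball d, X = r • toHyperboloid z := by
  have hXX := neg_pos.2 (minkowski_self_lt_zero hX)
  set r := √(-minkowski X X)
  have hr : 0 < r := Real.sqrt_pos.2 hXX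
  have hr2 : r ^ 2 = -minkowski X X := Real.sq_sqrt hXX.le
  have hY : OnHyperboloid (r⁻¹ • X) := by
    refine ⟨?_, mul_pos (inv_pos.2 hr) (lt_of_le_of_lt (norm_nonneg _) hX)⟩
    simp only [map_smul, LinearMap.smul_apply, smul_eq_mul]
    field_simp
    linarith
  refine ⟨r, hr, _, hY.ofHyperboloid_mem, ?_⟩
  rw [hY.toHyperboloid_ofHyperboloid, smul_smul, mul_inv_cancel₀ hr.ne', one_smul]

def ballTrace (Q : Submodule ℝ (ℝ × E d)) : Set (E d) := {z ∈ pball d | toHyperboloid z ∈ Q}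

lemma ballTrace_mono {Q Q' : Submodule ℝ (ℝ × E d)} (h : Q ≤ Q') :
    ballTrace Q ⊆ ballTrace Q' :=
  fun _ hz => ⟨hz.1, h hz.2⟩

lemma _root_.IsUnitSpeedGeodesic.minkowski_toHyperboloid {γ : ℝ → E d}
    (hγ : IsUnitSpeedGeodesic γ) (s t : ℝ) :
    minkowski (toHyperboloid (γ s)) (toHyperboloid (γ t)) = -cosh (s - t) := by
  have h := hγ.2 s t
  rw [dH_eq_arcosh_neg_minkowski (hγ.1 s) (hγ.1 t)] at h
  rw [← cosh_abs, ← h, cosh_arcosh (one_le_neg_minkowski_toHyperboloid (hγ.1 s) (hγ.1 t)),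
    neg_neg]

section CoshSinh

variable {Γ W : ℝ × E d} (hΓ : OnHyperboloid Γ) (hW : minkowski W W = 1)
  (hΓW : minkowski Γ W = 0)
include hΓ hW hΓW

lemma minkowski_cosh_sinh (s t : ℝ) :
    minkowski (cosh s • Γ + sinh s • W) (cosh t • Γ + sinh t • W) = -cosh (s - t) := by
  simp only [map_add, map_smul, LinearMap.add_apply, LinearMap.smul_apply, smul_eq_mul, hΓ.1, hW,
    hΓW, minkowski_comm W Γ, cosh_sub]
  ring

lemma onHyperboloid_cosh_sinh (t : ℝ) : OnHyperboloid (cosh t • Γ + sinh t • W) := by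
  have hself := minkowski_cosh_sinh hΓ hW hΓW t t
  rw [sub_self, cosh_zero] at hself
  refine ⟨hself, fst_pos_of_minkowski_lt_zero (by rw [hself]; norm_num)
    hΓ.norm_snd_lt_fst.le ?_⟩
  simp only [map_add, map_smul, LinearMap.add_apply, LinearMap.smul_apply, smul_eq_mul, hΓ.1,
    minkowski_comm W Γ, hΓW]
  linarith [cosh_pos t]

lemma isUnitSpeedGeodesic_cosh_sinh :
    IsUnitSpeedGeodesic fun t => ofHyperboloid (cosh t • Γ + sinh t • W) := by
  have h := onHyperboloid_cosh_sinh hΓ hW hΓW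
  refine ⟨fun t => (h t).ofHyperboloid_mem, fun s t => ?_⟩
  rw [dH_eq_arcosh_neg_minkowski (h s).ofHyperboloid_mem (h t).ofHyperboloid_mem,
    (h s).toHyperboloid_ofHyperboloid, (h t).toHyperboloid_ofHyperboloid,
    minkowski_cosh_sinh hΓ hW hΓW, neg_neg, ← cosh_abs, arcosh_cosh (abs_nonneg _)]

lemma exists_cosh_sinh_eq_of_mem_span {w : E d} (hw : w ∈ pball d)
    (hmem : toHyperboloid w ∈ span ℝ {Γ, W}) :
    ∃ t, toHyperboloid w = cosh t • Γ + sinh t • W := by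
  obtain ⟨a, b, hab⟩ := Submodule.mem_span_pair.1 hmem
  have hw' := onHyperboloid_toHyperboloid hw
  have hnorm := hw'.1
  have hpair := minkowski_lt_zero hw'.norm_snd_lt_fst hΓ.norm_snd_lt_fst
  rw [← hab] at hnorm hpair
  simp only [map_add, map_smul, LinearMap.add_apply, LinearMap.smul_apply, smul_eq_mul, hΓ.1, hW,
    hΓW, minkowski_comm W Γ] at hnorm hpair
  have ha : 0 < a := by linarith
  refine ⟨arsinh b, ?_⟩
  rw [cosh_arsinh, sinh_arsinh, ← hab, show 1 + b ^ 2 = a ^ 2 by linarith, sqrt_sq ha.le]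

lemma range_cosh_sinh :
    range (fun t => ofHyperboloid (cosh t • Γ + sinh t • W)) = ballTrace (span ℝ {Γ, W}) := by
  have h := onHyperboloid_cosh_sinh hΓ hW hΓW
  ext w
  constructor
  · rintro ⟨t, rfl⟩
    refine ⟨(h t).ofHyperboloid_mem, ?_⟩
    rw [(h t).toHyperboloid_ofHyperboloid]
    exact Submodule.mem_span_pair.2 ⟨_, _, rfl⟩
  · rintro ⟨hw, hmem⟩
    obtain ⟨t, ht⟩ := exists_cosh_sinh_eq_of_mem_span hΓ hW hΓW hw hmem
    exact ⟨t, show ofHyperboloid _ = w by rw [← ht, ofHyperboloid_toHyperboloid hw]⟩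

end CoshSinh

lemma _root_.IsUnitSpeedGeodesic.exists_cosh_sinh {γ : ℝ → E d} (hγ : IsUnitSpeedGeodesic γ) :
    ∃ W, minkowski W W = 1 ∧ minkowski (toHyperboloid (γ 0)) W = 0 ∧
      ∀ t, toHyperboloid (γ t) = cosh t • toHyperboloid (γ 0) + sinh t • W := by
  have hs1 : sinh 1 ≠ 0 := (sinh_pos_iff.2 one_pos).ne'
  have hB := hγ.minkowski_toHyperboloid
  -- the unit tangent vector at `γ 0`, read off from the chord to `γ 1`
  set W := (sinh 1)⁻¹ • (toHyperboloid (γ 1) - cosh 1 • toHyperboloid (γ 0)) with hW_def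
  have hW : ∀ t, minkowski (toHyperboloid (γ t)) W = sinh t := by
    intro t
    simp only [W, map_sub, map_smul, smul_eq_mul, hB, cosh_sub, sub_zero]
    field_simp
    ring
  have hW' : ∀ t, minkowski W (toHyperboloid (γ t)) = sinh t :=
    fun t => (minkowski_comm _ _).trans (hW t)
  have hWW : minkowski W W = 1 := by
    conv_lhs => arg 1; rw [hW_def]
    simp only [map_sub, map_smul, LinearMap.sub_apply, LinearMap.smul_apply, smul_eq_mul, hW,
      sinh_zero]
    field_simp
    ring
  refine ⟨W, hWW, by rw [hW 0, sinh_zero], fun t => ?_⟩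
  rw [← sub_eq_zero]
  apply eq_zero_of_orthogonal_of_timelike (Y := toHyperboloid (γ 0)) (by rw [hB]; simp)
  · simp only [map_sub, map_add, map_smul, LinearMap.sub_apply, LinearMap.add_apply,
      LinearMap.smul_apply, smul_eq_mul, hB, hW', sub_zero, sub_self, cosh_zero, sinh_zero]
    ring
  · simp only [map_sub, map_add, map_smul, LinearMap.sub_apply, LinearMap.add_apply,
      LinearMap.smul_apply, smul_eq_mul, hB, hW, hW', hWW, sub_self, sub_zero, zero_sub,
      cosh_neg, cosh_zero, sinh_zero]
    nlinarith [cosh_sq t]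

lemma span_pair_eq_of_cosh_sinh {Γ W L₀ L₁ : ℝ × E d} {s₀ s₁ : ℝ} (h : s₀ ≠ s₁)
    (h₀ : L₀ = cosh s₀ • Γ + sinh s₀ • W) (h₁ : L₁ = cosh s₁ • Γ + sinh s₁ • W) :
    span ℝ {Γ, W} = span ℝ {L₀, L₁} := by
  have hs : sinh (s₁ - s₀) ≠ 0 := by
    rw [Ne, sinh_eq_zero, sub_eq_zero]; exact h.symm
  have hL : ∀ a b : ℝ, a • L₀ + b • L₁ ∈ span ℝ {L₀, L₁} :=
    fun a b => Submodule.mem_span_pair.2 ⟨a, b, rfl⟩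
  apply le_antisymm
  · rw [Submodule.span_le, insert_subset_iff, singleton_subset_iff, SetLike.mem_coe,
      SetLike.mem_coe]
    constructor
    · rw [← Submodule.smul_mem_iff _ hs]
      convert hL (sinh s₁) (-sinh s₀) using 1
      rw [h₀, h₁, sinh_sub]
      module
    · rw [← Submodule.smul_mem_iff _ hs]
      convert hL (-cosh s₁) (cosh s₀) using 1
      rw [h₀, h₁, sinh_sub]
      module
  · rw [Submodule.span_le, insert_subset_iff, singleton_subset_iff, h₀, h₁]
    exact ⟨Submodule.mem_span_pair.2 ⟨_, _, rfl⟩, Submodule.mem_span_pair.2 ⟨_, _, rfl⟩⟩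

lemma _root_.IsGeodesicLine.eq_ballTrace {c : Set (E d)} (hc : IsGeodesicLine c) {x y : E d}
    (hx : x ∈ c) (hy : y ∈ c) (hxy : x ≠ y) :
    c = ballTrace (span ℝ {toHyperboloid x, toHyperboloid y}) := by
  obtain ⟨γ, hγ, rfl⟩ := hc
  obtain ⟨W, hWW, h0W, hrep⟩ := hγ.exists_cosh_sinh
  obtain ⟨s₀, rfl⟩ := hx
  obtain ⟨s₁, rfl⟩ := hy
  rw [← span_pair_eq_of_cosh_sinh (fun h => hxy (congrArg γ h)) (hrep s₀) (hrep s₁),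
    ← range_cosh_sinh (onHyperboloid_toHyperboloid (hγ.1 0)) hWW h0W]
  congr 1
  ext t
  rw [← hrep, ofHyperboloid_toHyperboloid (hγ.1 t)]

lemma isGeodesicLine_ballTrace {u v : E d} (hu : u ∈ pball d) (hv : v ∈ pball d) (huv : u ≠ v) :
    IsGeodesicLine (ballTrace (span ℝ {toHyperboloid u, toHyperboloid v})) := by
  obtain ⟨δ, hδ_def⟩ : ∃ δ, δ = dH u v := ⟨_, rfl⟩
  have hΓ := onHyperboloid_toHyperboloid hu
  have hcosh : minkowski (toHyperboloid u) (toHyperboloid v) = -cosh δ := by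
    rw [hδ_def, dH_eq_arcosh_neg_minkowski hu hv,
      cosh_arcosh (one_le_neg_minkowski_toHyperboloid hu hv), neg_neg]
  have hδ : 0 < δ := by
    rw [hδ_def, dH_eq_arcosh_neg_minkowski hu hv]
    exact arcosh_pos (one_lt_neg_minkowski_toHyperboloid hu hv huv)
  have hsinh : 0 < sinh δ := sinh_pos_iff.2 hδ
  set W := (sinh δ)⁻¹ • (toHyperboloid v - cosh δ • toHyperboloid u)
  have hΓW : minkowski (toHyperboloid u) W = 0 := by
    simp only [W, map_sub, map_smul, smul_eq_mul, hcosh, hΓ.1]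
    ring
  have hWW : minkowski W W = 1 := by
    simp only [W, map_sub, map_smul, LinearMap.sub_apply, LinearMap.smul_apply, smul_eq_mul,
      hcosh, minkowski_comm (toHyperboloid v) (toHyperboloid u), hΓ.1,
      (onHyperboloid_toHyperboloid hv).1]
    field_simp
    nlinarith [cosh_sq δ]
  have hv' : toHyperboloid v = cosh δ • toHyperboloid u + sinh δ • W := by
    simp only [W, smul_smul, mul_inv_cancel₀ hsinh.ne', one_smul]
    abel
  refine ⟨_, isUnitSpeedGeodesic_cosh_sinh hΓ hWW hΓW, ?_⟩
  rw [range_cosh_sinh hΓ hWW hΓW,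
    span_pair_eq_of_cosh_sinh (s₀ := 0) (L₀ := toHyperboloid u) hδ.ne (by simp) hv']

lemma totGeodesic_ballTrace (Q : Submodule ℝ (ℝ × E d)) : TotGeodesic (ballTrace Q) := by
  refine ⟨fun _ hz => hz.1, fun x hx y hy hxy c hc hxc hyc => ?_⟩
  rw [hc.eq_ballTrace hxc hyc hxy]
  refine ballTrace_mono (Submodule.span_le.2 ?_)
  rw [insert_subset_iff, singleton_subset_iff]
  exact ⟨hx.2, hy.2⟩

lemma _root_.TotGeodesic.mem_of_mem_span_pair {M : Set (E d)} (hM : TotGeodesic M)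
    {w w' z : E d} (hw : w ∈ M) (hw' : w' ∈ M) (hz : z ∈ pball d)
    (h : toHyperboloid z ∈ span ℝ {toHyperboloid w, toHyperboloid w'}) : z ∈ M := by
  by_cases hne : w = w'
  · subst hne
    obtain ⟨a, b, hab⟩ := Submodule.mem_span_pair.1 h
    rwa [eq_of_toHyperboloid_eq_smul hz (hM.1 hw) (by rw [← hab, add_smul])]
  · exact hM.2 w hw w' hw' hne _ (isGeodesicLine_ballTrace (hM.1 hw) (hM.1 hw') hne)
      ⟨hM.1 hw, Submodule.subset_span (by simp)⟩ ⟨hM.1 hw', Submodule.subset_span (by simp)⟩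
      ⟨hz, h⟩

def liftCone (M : Set (E d)) : Set (ℝ × E d) :=
  {X | ∃ r : ℝ, 0 ≤ r ∧ ∃ w ∈ M, X = r • toHyperboloid w}

lemma smul_mem_liftCone {M : Set (E d)} {X : ℝ × E d} (hX : X ∈ liftCone M) {c : ℝ}
    (hc : 0 ≤ c) : c • X ∈ liftCone M := by
  obtain ⟨r, hr, w, hw, rfl⟩ := hX
  exact ⟨c * r, mul_nonneg hc hr, w, hw, by rw [smul_smul]⟩

lemma _root_.TotGeodesic.add_mem_liftCone {M : Set (E d)} (hM : TotGeodesic M) {X Y : ℝ × E d}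
    (hX : X ∈ liftCone M) (hY : Y ∈ liftCone M) : X + Y ∈ liftCone M := by
  obtain ⟨r, hr, w, hw, rfl⟩ := hX
  obtain ⟨r', hr', w', hw', rfl⟩ := hY
  rcases hr.eq_or_lt with rfl | hr
  · simpa using ⟨r', hr', w', hw', rfl⟩
  rcases hr'.eq_or_lt with rfl | hr'
  · simpa using ⟨r, hr.le, w, hw, rfl⟩
  have hfut := norm_snd_smul_toHyperboloid_lt hr (hM.1 hw)
  have hfut' := norm_snd_smul_toHyperboloid_lt hr' (hM.1 hw')
  obtain ⟨s, hs, z, hz, hsum⟩ :=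
    exists_pos_smul_toHyperboloid (X := r • toHyperboloid w + r' • toHyperboloid w') (by
      rw [Prod.snd_add, Prod.fst_add]
      linarith [norm_add_le (r • toHyperboloid w).2 (r' • toHyperboloid w').2])
  refine ⟨s, hs.le, z, hM.mem_of_mem_span_pair hw hw' hz ?_, hsum⟩
  refine Submodule.mem_span_pair.2 ⟨s⁻¹ * r, s⁻¹ * r', ?_⟩
  rw [mul_smul, mul_smul, ← smul_add, hsum, smul_smul, inv_mul_cancel₀ hs.ne', one_smul]

lemma _root_.TotGeodesic.exists_sub_of_mem_span {M : Set (E d)} (hM : TotGeodesic M)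
    {w₀ : E d} (hw₀ : w₀ ∈ M) {v : ℝ × E d} (hv : v ∈ span ℝ (toHyperboloid '' M)) :
    ∃ X ∈ liftCone M, ∃ Y ∈ liftCone M, v = X - Y := by
  have hzero : (0 : ℝ × E d) ∈ liftCone M := ⟨0, le_rfl, w₀, hw₀, (zero_smul _ _).symm⟩
  induction hv using Submodule.span_induction with
  | mem v hv =>
    obtain ⟨w, hw, rfl⟩ := hv
    exact ⟨_, ⟨1, zero_le_one, w, hw, (one_smul _ _).symm⟩, 0, hzero, (sub_zero _).symm⟩
  | zero => exact ⟨0, hzero, 0, hzero, (sub_zero _).symm⟩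
  | add v v' _ _ hv hv' =>
    obtain ⟨X, hX, Y, hY, rfl⟩ := hv
    obtain ⟨X', hX', Y', hY', rfl⟩ := hv'
    exact ⟨X + X', hM.add_mem_liftCone hX hX', Y + Y', hM.add_mem_liftCone hY hY', by abel⟩
  | smul c v _ hv =>
    obtain ⟨X, hX, Y, hY, rfl⟩ := hv
    rcases le_total 0 c with hc | hc
    · exact ⟨c • X, smul_mem_liftCone hX hc, c • Y, smul_mem_liftCone hY hc, smul_sub c X Y⟩
    · exact ⟨(-c) • Y, smul_mem_liftCone hY (neg_nonneg.2 hc), (-c) • X,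
        smul_mem_liftCone hX (neg_nonneg.2 hc), by module⟩

lemma _root_.TotGeodesic.mem_of_toHyperboloid_mem_span {M : Set (E d)} (hM : TotGeodesic M)
    {z : E d} (hz : z ∈ pball d) (h : toHyperboloid z ∈ span ℝ (toHyperboloid '' M)) :
    z ∈ M := by
  obtain ⟨w₀, hw₀⟩ : M.Nonempty := by
    by_contra hM0
    rw [not_nonempty_iff_eq_empty.1 hM0, image_empty, Submodule.span_empty,
      Submodule.mem_bot] at h
    simpa [h] using (onHyperboloid_toHyperboloid hz).2
  obtain ⟨_, ⟨r, -, w, hw, rfl⟩, _, ⟨r', -, w', hw', rfl⟩, hrep⟩ :=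
    hM.exists_sub_of_mem_span hw₀ h
  exact hM.mem_of_mem_span_pair hw hw' hz
    (Submodule.mem_span_pair.2 ⟨r, -r', by rw [hrep]; module⟩)

def idealLift (q : E d) : ℝ × E d := (1, q)

lemma minkowski_idealLift_self {q : E d} (hq : ‖q‖ = 1) :
    minkowski (idealLift q) (idealLift q) = 0 := by
  simp [minkowski_self, idealLift, hq]

lemma minkowski_toHyperboloid_idealLift {q x : E d} (hq : ‖q‖ = 1) (hx : x ∈ pball d) :
    minkowski (toHyperboloid x) (idealLift q) = -exp (busemann q x) := by
  have hx' := one_sub_norm_sq_pos hx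
  have hqx : q - x ≠ 0 := by
    rintro h
    rw [sub_eq_zero] at h
    exact (show ‖x‖ < 1 from hx).ne (h ▸ hq)
  rw [busemann, exp_log (by positivity), minkowski_apply, toHyperboloid, idealLift,
    real_inner_smul_left, norm_sub_sq_real, hq, real_inner_comm]
  field_simp
  ring

lemma idealLift_mem_span_of_mem_closure {M : Set (E d)} (hM : M ⊆ pball d) {q : E d}
    (hq : ‖q‖ = 1) (h : q ∈ closure M) : idealLift q ∈ span ℝ (toHyperboloid '' M) := by
  -- the rescaled lifts `((1 - ‖w‖²) / 2) • toHyperboloid w = ((1 + ‖w‖²) / 2, w)` extend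
  -- continuously to the sphere, where they are the ideal lifts
  set f : E d → ℝ × E d := fun w => ((1 + ‖w‖ ^ 2) / 2, w)
  have hfM : ∀ w ∈ M, f w ∈ span ℝ (toHyperboloid '' M) := by
    intro w hw
    have := (one_sub_norm_sq_pos (hM hw)).ne'
    convert Submodule.smul_mem _ ((1 - ‖w‖ ^ 2) / 2)
      (Submodule.subset_span (mem_image_of_mem _ hw))
    refine Prod.ext ?_ ?_
    · simp only [f, toHyperboloid, Prod.smul_fst, smul_eq_mul]
      field_simp
    · simp only [f, toHyperboloid, Prod.smul_snd, smul_smul]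
      rw [div_mul_div_comm, mul_comm, div_self (by positivity), one_smul]
  have := map_mem_closure (by fun_prop) h hfM
  rw [(Submodule.closed_of_finiteDimensional _).closure_eq] at this
  simpa [f, hq, idealLift] using this

lemma mem_closure_ballTrace {Q : Submodule ℝ (ℝ × E d)} {q b : E d} (hq : ‖q‖ = 1)
    (hb : b ∈ pball d) (hbQ : toHyperboloid b ∈ Q) (hqQ : idealLift q ∈ Q) :
    q ∈ closure (ballTrace Q) := by
  set e := exp (busemann q b)
  have he : 0 < e := exp_pos _
  have hAq : minkowski (toHyperboloid b) (idealLift q) = -e :=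
    minkowski_toHyperboloid_idealLift hq hb
  have hA := onHyperboloid_toHyperboloid hb
  generalize toHyperboloid b = A at hAq hA hbQ
  obtain ⟨a₁, a₂⟩ := A
  -- `f α = ofHyperboloid (α • (a₁, a₂) + (c / α) • idealLift q)` for `c = (1 - α²) / (2e)`,
  -- written so that it extends continuously to `f 0 = q`
  set f : ℝ → E d := fun α =>
    (α + α ^ 2 * a₁ + (1 - α ^ 2) / (2 * e))⁻¹ • (α ^ 2 • a₂ + ((1 - α ^ 2) / (2 * e)) • q)
  have hf0 : f 0 = q := by
    simp only [f, zero_add, zero_smul, ne_eq, OfNat.ofNat_ne_zero, not_false_eq_true, zero_pow,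
      zero_mul, sub_zero, smul_smul]
    rw [inv_mul_cancel₀ (by positivity), one_smul]
  have hlim : Tendsto f (𝓝[>] 0) (𝓝 q) := by
    rw [← hf0]
    refine tendsto_nhdsWithin_of_tendsto_nhds (ContinuousAt.tendsto ?_)
    simp only [f]
    fun_prop (disch := simp [he.ne'])
  have hmem : ∀ α ∈ Ioo (0 : ℝ) 1, f α ∈ ballTrace Q := by
    rintro α ⟨hα0, hα1⟩
    have ha₁ := hA.2
    have hc : 0 < (1 - α ^ 2) / (2 * e) := div_pos (by nlinarith) (by positivity)
    set Y := α • (a₁, a₂) + ((1 - α ^ 2) / (2 * e) / α) • idealLift q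
    have hY : OnHyperboloid Y := by
      refine ⟨?_, ?_⟩
      · simp only [Y, map_add, map_smul, LinearMap.add_apply, LinearMap.smul_apply, smul_eq_mul,
          hA.1, hAq, minkowski_comm (idealLift q), minkowski_idealLift_self hq]
        field_simp
        ring
      · simp only [Y, Prod.fst_add, Prod.smul_fst, idealLift, smul_eq_mul, mul_one]
        positivity
    have hfY : f α = ofHyperboloid Y := by
      simp only [f, ofHyperboloid, Y, Prod.fst_add, Prod.snd_add, Prod.smul_fst, Prod.smul_snd,
        idealLift, smul_eq_mul, mul_one, smul_add, smul_smul]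
      congr 2 <;> field_simp <;> ring
    rw [hfY]
    refine ⟨hY.ofHyperboloid_mem, ?_⟩
    rw [hY.toHyperboloid_ofHyperboloid]
    exact Q.add_mem (Q.smul_mem _ hbQ) (Q.smul_mem _ hqQ)
  exact mem_closure_of_tendsto hlim (Filter.mem_of_superset (Ioo_mem_nhdsGT one_pos) hmem)

def spine {ι : Type*} (p : ι → E d) : Submodule ℝ (ℝ × E d) :=
  span ℝ (range fun i => idealLift (p i))

lemma ballTrace_subset_GH {S : Set (E d)} {Q : Submodule ℝ (ℝ × E d)}
    (hQ : ∀ M, TotGeodesic M → S ∩ pball d ⊆ M → S ⊆ closure M →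
      Q ≤ span ℝ (toHyperboloid '' M)) :
    ballTrace Q ⊆ GH S :=
  fun _ hz => mem_sInter.2 fun M ⟨hM, hSM, hScl⟩ =>
    hM.mem_of_toHyperboloid_mem_span hz.1 (hQ M hM hSM hScl hz.2)

lemma spine_le_span {ι : Type*} {p : ι → E d} (hp : ∀ i, ‖p i‖ = 1) {M : Set (E d)}
    (hM : M ⊆ pball d) (hcl : range p ⊆ closure M) : spine p ≤ span ℝ (toHyperboloid '' M) :=
  Submodule.span_le.2 <| range_subset_iff.2 fun i =>
    idealLift_mem_span_of_mem_closure hM (hp i) (hcl (mem_range_self i))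

lemma ballTrace_spine_subset_GH {ι : Type*} {p : ι → E d} (hp : ∀ i, ‖p i‖ = 1) :
    ballTrace (spine p) ⊆ GH (range p) :=
  ballTrace_subset_GH fun _ hM _ hcl => spine_le_span hp hM.1 hcl

lemma GH_insert_range_eq {ι : Type*} {p : ι → E d} (hp : ∀ i, ‖p i‖ = 1) {b : E d}
    (hb : b ∈ pball d) :
    GH (insert b (range p)) = ballTrace (ℝ ∙ toHyperboloid b ⊔ spine p) := by
  have hbW : toHyperboloid b ∈ ℝ ∙ toHyperboloid b ⊔ spine p :=
    Submodule.mem_sup_left (Submodule.mem_span_singleton_self _)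
  refine subset_antisymm (sInter_subset_of_mem ⟨totGeodesic_ballTrace _, ?_, ?_⟩)
    (ballTrace_subset_GH fun M hM hSM hScl => sup_le ?_ (spine_le_span hp hM.1
      ((subset_insert _ _).trans hScl)))
  · rintro _ ⟨rfl | ⟨i, rfl⟩, hx⟩
    · exact ⟨hb, hbW⟩
    · exact absurd (show ‖p i‖ < 1 from hx) (by rw [hp i]; exact lt_irrefl 1)
  · rintro _ (rfl | ⟨i, rfl⟩)
    · exact subset_closure ⟨hb, hbW⟩
    · exact mem_closure_ballTrace (hp i) hb hbW
        (Submodule.mem_sup_right (Submodule.subset_span ⟨i, rfl⟩))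
  · exact (Submodule.span_singleton_le_iff_mem _ _).2
      (Submodule.subset_span ⟨b, hSM ⟨mem_insert _ _, hb⟩, rfl⟩)

lemma LinearMap.BilinForm.mem_orthogonal_span_iff {R M : Type*} [CommRing R] [AddCommGroup M]
    [Module R M] {B : LinearMap.BilinForm R M} {S : Set M} {m : M} :
    m ∈ B.orthogonal (span R S) ↔ ∀ s ∈ S, B s m = 0 := by
  refine ⟨fun h s hs => h s (Submodule.subset_span hs), fun h n hn => ?_⟩
  have : span R S ≤ LinearMap.ker (B.flip m) := Submodule.span_le.2 fun s hs => h s hs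
  exact this hn

lemma mem_horosphere_iff {q x y : E d} (hq : ‖q‖ = 1) (hx : x ∈ pball d) (hy : y ∈ pball d) :
    y ∈ horosphere q x ↔
      minkowski (toHyperboloid y) (idealLift q) = minkowski (toHyperboloid x) (idealLift q) := by
  rw [minkowski_toHyperboloid_idealLift hq hy, minkowski_toHyperboloid_idealLift hq hx, neg_inj,
    exp_eq_exp]
  exact ⟨fun h => h.2, fun h => ⟨hy, h⟩⟩

lemma mem_horoInter_iff {K : ℕ} {p : Fin K → E d} (hp : ∀ i, ‖p i‖ = 1) {x y : E d}
    (hx : x ∈ pball d) (hy : y ∈ pball d) :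
    y ∈ horoInter p x ↔ toHyperboloid y - toHyperboloid x ∈ minkowski.orthogonal (spine p) := by
  simp only [horoInter, mem_iInter, mem_horosphere_iff (hp _) hx hy, spine,
    LinearMap.BilinForm.mem_orthogonal_span_iff, forall_mem_range, map_sub,
    minkowski_comm (idealLift _), sub_eq_zero]

/-- The horospherical projection with base point `c` in the hyperboloid model, `V` standing for
the span of the ideal points; the orthogonality condition says that `u` lies on the horospheres
through `x`. -/
def IsLinearHoroProj (V : Submodule ℝ (ℝ × E d)) (c x u : E d) : Prop :=
  u ∈ ballTrace (ℝ ∙ toHyperboloid c ⊔ V) ∧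
    toHyperboloid u - toHyperboloid x ∈ minkowski.orthogonal V ∧
    ∀ z ∈ ballTrace (ℝ ∙ toHyperboloid c ⊔ V),
      toHyperboloid z - toHyperboloid x ∈ minkowski.orthogonal V → z ≠ u → dH c u < dH c z

lemma _root_.IsHoroProj.isLinearHoroProj {K : ℕ} {p : Fin K → E d} (hp : ∀ i, ‖p i‖ = 1)
    {b : E d} (hb : b ∈ pball d) {ρ : E d → E d} (hρ : IsHoroProj b p ρ) {x : E d}
    (hx : x ∈ pball d) : IsLinearHoroProj (spine p) b x (ρ x) := by
  obtain ⟨⟨hGH, hS⟩, hmin, -⟩ := hρ x hx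
  rw [GH_insert_range_eq hp hb] at hGH hmin
  exact ⟨hGH, (mem_horoInter_iff hp hx hGH.1).1 hS,
    fun z hz hzx hne => hmin z ⟨hz, (mem_horoInter_iff hp hx hz.1).2 hzx⟩ hne⟩

lemma minkowski_eq_neg_cosh_of_mem_span_null {A ξ U U' : ℝ × E d} (hξ : minkowski ξ ξ = 0)
    (hU : U ∈ span ℝ {A, ξ}) (hU' : U' ∈ span ℝ {A, ξ})
    (hUU : minkowski U U = -1) (hU'U' : minkowski U' U' = -1) {β β' : ℝ}
    (hUξ : minkowski U ξ = -exp β) (hU'ξ : minkowski U' ξ = -exp β') :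
    minkowski U U' = -cosh (β - β') := by
  obtain ⟨l, a, rfl⟩ := Submodule.mem_span_pair.1 hU
  obtain ⟨l', a', rfl⟩ := Submodule.mem_span_pair.1 hU'
  simp only [map_add, map_smul, LinearMap.add_apply, LinearMap.smul_apply, smul_eq_mul, hξ,
    minkowski_comm ξ A, mul_zero, add_zero] at hUU hU'U' hUξ hU'ξ ⊢
  have hl : l ≠ 0 := by rintro rfl; simp [(exp_pos β).ne'] at hUξ
  have hl' : l' ≠ 0 := by rintro rfl; simp [(exp_pos β').ne'] at hU'ξ
  have he : minkowski A ξ ≠ 0 := by rintro h; simp [h, (exp_pos β).ne'] at hUξ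
  rw [cosh_eq, neg_sub, exp_sub, exp_sub, ← neg_neg (exp β), ← neg_neg (exp β'), ← hUξ, ← hU'ξ]
  field_simp
  linear_combination l' ^ 2 * hUU + l ^ 2 * hU'U'

lemma IsLinearHoroProj.minkowski_eq_neg_cosh {q : E d} (hq : ‖q‖ = 1) {c x y u v : E d}
    (hx : x ∈ pball d) (hy : y ∈ pball d) (hu : IsLinearHoroProj (ℝ ∙ idealLift q) c x u)
    (hv : IsLinearHoroProj (ℝ ∙ idealLift q) c y v) :
    minkowski (toHyperboloid u) (toHyperboloid v) = -cosh (busemann q x - busemann q y) := by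
  have hpair : ∀ {w z : E d}, toHyperboloid w - toHyperboloid z ∈
      minkowski.orthogonal (ℝ ∙ idealLift q) → z ∈ pball d →
      minkowski (toHyperboloid w) (idealLift q) = -exp (busemann q z) := by
    intro w z hwz hz
    have := hwz _ (Submodule.mem_span_singleton_self _)
    rw [map_sub, minkowski_comm (idealLift q), minkowski_comm (idealLift q), sub_eq_zero] at this
    rw [this, minkowski_toHyperboloid_idealLift hq hz]
  have hspan : ℝ ∙ toHyperboloid c ⊔ ℝ ∙ idealLift q = span ℝ {toHyperboloid c, idealLift q} :=
    (Submodule.span_insert _ _).symm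
  exact minkowski_eq_neg_cosh_of_mem_span_null (minkowski_idealLift_self hq) (hspan ▸ hu.1.2)
    (hspan ▸ hv.1.2) (onHyperboloid_toHyperboloid hu.1.1).1 (onHyperboloid_toHyperboloid hv.1.1).1
    (hpair hu.2.1 hx) (hpair hv.2.1 hy)

lemma isCompl_orthogonal_of_timelike_mem {V : Submodule ℝ (ℝ × E d)} {τ : ℝ × E d}
    (hτV : τ ∈ V) (hτ : minkowski τ τ < 0) : IsCompl V (minkowski.orthogonal V) :=
  (LinearMap.BilinForm.isCompl_orthogonal_iff_disjoint minkowski_isRefl).2 <|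
    Submodule.disjoint_def.2 fun R hR hR' =>
      eq_zero_of_orthogonal_of_timelike hτ ((minkowski_comm _ _).trans (hR' τ hτV)) (hR' R hR).le

lemma minkowski_add_smul_of_orthogonal {N N' n : ℝ × E d} {s s' : ℝ} (hs : 0 ≤ s) (hs' : 0 ≤ s')
    (hn : 0 ≤ minkowski n n) (hNn : minkowski N n = 0) (hN'n : minkowski N' n = 0)
    (hU : minkowski (N + s • n) (N + s • n) = -1)
    (hU' : minkowski (N' + s' • n) (N' + s' • n) = -1) :
    minkowski (N + s • n) (N' + s' • n) =
      minkowski N N' + √(-1 - minkowski N N) * √(-1 - minkowski N' N') := by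
  simp only [map_add, map_smul, LinearMap.add_apply, LinearMap.smul_apply, smul_eq_mul, hNn, hN'n,
    minkowski_comm n N, minkowski_comm n N'] at hU hU' ⊢
  rw [show -1 - minkowski N N = s ^ 2 * minkowski n n by linarith,
    show -1 - minkowski N' N' = s' ^ 2 * minkowski n n by linarith,
    sqrt_mul (sq_nonneg _), sqrt_mul (sq_nonneg _), sqrt_sq hs, sqrt_sq hs',
    mul_mul_mul_comm, mul_self_sqrt hn]
  ring

section Projection

variable {V : Submodule ℝ (ℝ × E d)} (hV : IsCompl V (minkowski.orthogonal V))
include hV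

/-- The value of `⟪π̂ x, π̂ y⟫` at `X = x̂`, `Y = ŷ`, whatever the base point. -/
def horoPairing (X Y : ℝ × E d) : ℝ :=
  minkowski (V.projection _ hV X) (V.projection _ hV Y) +
    √(-1 - minkowski (V.projection _ hV X) (V.projection _ hV X)) *
      √(-1 - minkowski (V.projection _ hV Y) (V.projection _ hV Y))

lemma sub_projection_mem_orthogonal (X : ℝ × E d) :
    X - V.projection _ hV X ∈ minkowski.orthogonal V := by
  rw [← Submodule.projection_eq_self_sub_projection hV]
  exact Submodule.projection_apply_mem _ _

lemma minkowski_self_sub_projection_pos {τ : ℝ × E d} (hτV : τ ∈ V) (hτ : ‖τ.2‖ < τ.1)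
    {X : ℝ × E d} (hXV : X ∉ V) :
    0 < minkowski (X - V.projection _ hV X) (X - V.projection _ hV X) := by
  refine minkowski_self_pos_of_orthogonal (minkowski_self_lt_zero hτ)
    ((minkowski_comm _ _).trans (sub_projection_mem_orthogonal hV X τ hτV)) fun h => hXV ?_
  rw [sub_eq_zero.1 h]
  exact Submodule.projection_apply_mem _ _

lemma IsLinearHoroProj.exists_eq_projection_add_smul {c x u : E d}
    (hu : IsLinearHoroProj V c x u) :
    ∃ a : ℝ, toHyperboloid u = V.projection _ hV (toHyperboloid x) +
      a • (toHyperboloid c - V.projection _ hV (toHyperboloid c)) := by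
  obtain ⟨_, hC, R, hR, hrep⟩ := Submodule.mem_sup.1 hu.1.2
  obtain ⟨a, rfl⟩ := Submodule.mem_span_singleton.1 hC
  refine ⟨a, ?_⟩
  set P := V.projection _ hV
  rw [← sub_eq_zero]
  refine Submodule.disjoint_def.1 hV.disjoint _ ?_ ?_
  · rw [← hrep]
    convert V.sub_mem (V.add_mem hR (V.smul_mem a (Submodule.projection_apply_mem hV
      (toHyperboloid c)))) (Submodule.projection_apply_mem hV (toHyperboloid x)) using 1
    module
  · convert (minkowski.orthogonal V).sub_mem (Submodule.add_mem _ hu.2.1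
      (sub_projection_mem_orthogonal hV (toHyperboloid x))) ((minkowski.orthogonal V).smul_mem a
        (sub_projection_mem_orthogonal hV (toHyperboloid c))) using 1
    abel

lemma exists_toHyperboloid_eq_projection_sub_smul {τ : ℝ × E d} (hτV : τ ∈ V)
    (hτ : ‖τ.2‖ < τ.1) {x u : E d} (hx : x ∈ pball d) (hu : u ∈ pball d) {n : ℝ × E d}
    (hn : n ∈ minkowski.orthogonal V) {a : ℝ}
    (ha : toHyperboloid u = V.projection _ hV (toHyperboloid x) + a • n) :
    ∃ z ∈ pball d, toHyperboloid z = V.projection _ hV (toHyperboloid x) - a • n := by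
  set N := V.projection _ hV (toHyperboloid x)
  have hNn : minkowski N n = 0 := hn N (Submodule.projection_apply_mem hV _)
  have hZZ : minkowski (N - a • n) (N - a • n) = -1 := by
    have hU := (onHyperboloid_toHyperboloid hu).1
    rw [ha] at hU
    simp only [map_add, map_sub, map_smul, LinearMap.add_apply, LinearMap.sub_apply,
      LinearMap.smul_apply, smul_eq_mul, hNn, minkowski_comm n N] at hU ⊢
    linarith
  have hZτ : minkowski (N - a • n) τ < 0 := by
    have hNτ : minkowski N τ = minkowski (toHyperboloid x) τ := by
      have := sub_projection_mem_orthogonal hV (toHyperboloid x) τ hτV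
      rw [map_sub, sub_eq_zero] at this
      rw [minkowski_comm, ← this, minkowski_comm]
    rw [map_sub, LinearMap.sub_apply, map_smul, LinearMap.smul_apply, minkowski_comm n,
      hn τ hτV, smul_zero, sub_zero, hNτ]
    exact minkowski_lt_zero (onHyperboloid_toHyperboloid hx).norm_snd_lt_fst hτ
  have hZ : OnHyperboloid (N - a • n) :=
    ⟨hZZ, fst_pos_of_minkowski_lt_zero (by rw [hZZ]; norm_num) hτ.le hZτ⟩
  exact ⟨_, hZ.ofHyperboloid_mem, hZ.toHyperboloid_ofHyperboloid⟩

/-- If `s < 0`, reflecting `u` in the spine would give a point of the same slice and horospheres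
strictly closer to `c`. -/
lemma IsLinearHoroProj.exists_nonneg_smul {τ : ℝ × E d} (hτV : τ ∈ V) (hτ : ‖τ.2‖ < τ.1)
    {c x u : E d} (hc : c ∈ pball d) (hcV : toHyperboloid c ∉ V) (hx : x ∈ pball d)
    (hu : IsLinearHoroProj V c x u) :
    ∃ s : ℝ, 0 ≤ s ∧ toHyperboloid u = V.projection _ hV (toHyperboloid x) +
      s • (toHyperboloid c - V.projection _ hV (toHyperboloid c)) := by
  obtain ⟨a, ha⟩ := hu.exists_eq_projection_add_smul hV
  refine ⟨a, not_lt.1 fun hneg => ?_, ha⟩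
  set P := V.projection _ hV
  set n := toHyperboloid c - P (toHyperboloid c)
  have hn : n ∈ minkowski.orthogonal V := sub_projection_mem_orthogonal hV _
  have hν : 0 < minkowski n n := minkowski_self_sub_projection_pos hV hτV hτ hcV
  obtain ⟨z, hz, hzZ⟩ :=
    exists_toHyperboloid_eq_projection_sub_smul hV hτV hτ hx hu.1.1 hn ha
  have hzW : z ∈ ballTrace (ℝ ∙ toHyperboloid c ⊔ V) := by
    refine ⟨hz, hzZ ▸ Submodule.mem_sup.2 ⟨(-a) • toHyperboloid c,
      Submodule.smul_mem _ _ (Submodule.mem_span_singleton_self _), P (toHyperboloid x) +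
        a • P (toHyperboloid c), V.add_mem (Submodule.projection_apply_mem hV _)
        (V.smul_mem _ (Submodule.projection_apply_mem hV _)), by simp only [n]; module⟩⟩
  have hzx : toHyperboloid z - toHyperboloid x ∈ minkowski.orthogonal V := by
    rw [hzZ, show P (toHyperboloid x) - a • n - toHyperboloid x =
      -(toHyperboloid x - P (toHyperboloid x)) - a • n by abel]
    exact Submodule.sub_mem _ (Submodule.neg_mem _ (sub_projection_mem_orthogonal hV _))
      (Submodule.smul_mem _ _ hn)
  have hzu : z ≠ u := by
    rintro rfl
    rw [hzZ, sub_eq_add_neg, add_right_inj, ← neg_smul, ← sub_eq_zero, ← sub_smul,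
      smul_eq_zero] at ha
    rcases ha with h | h
    · linarith
    · rw [h, map_zero] at hν
      exact hν.false
  have hlt := (dH_lt_dH_iff hc hu.1.1 hz).1 (hu.2.2 z hzW hzx hzu)
  have hcn : minkowski (toHyperboloid c) n = minkowski n n := by
    conv_lhs => rw [show toHyperboloid c = P (toHyperboloid c) + n from (add_sub_cancel _ _).symm]
    rw [map_add, LinearMap.add_apply, hn _ (Submodule.projection_apply_mem hV _), zero_add]
  rw [hzZ, ha, map_sub, map_add, map_smul, hcn] at hlt
  simp only [smul_eq_mul] at hlt
  nlinarith

lemma IsLinearHoroProj.minkowski_eq_horoPairing {τ : ℝ × E d} (hτV : τ ∈ V) (hτ : ‖τ.2‖ < τ.1)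
    {c x y u v : E d} (hc : c ∈ pball d) (hcV : toHyperboloid c ∉ V) (hx : x ∈ pball d)
    (hy : y ∈ pball d) (hu : IsLinearHoroProj V c x u) (hv : IsLinearHoroProj V c y v) :
    minkowski (toHyperboloid u) (toHyperboloid v) =
      horoPairing hV (toHyperboloid x) (toHyperboloid y) := by
  obtain ⟨s, hs, hsu⟩ := hu.exists_nonneg_smul hV hτV hτ hc hcV hx
  obtain ⟨s', hs', hsv⟩ := hv.exists_nonneg_smul hV hτV hτ hc hcV hy
  have hn := sub_projection_mem_orthogonal hV (toHyperboloid c)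
  have hUU := (onHyperboloid_toHyperboloid hu.1.1).1
  have hVV := (onHyperboloid_toHyperboloid hv.1.1).1
  rw [hsu] at hUU ⊢
  rw [hsv] at hVV ⊢
  exact minkowski_add_smul_of_orthogonal hs hs'
    (minkowski_self_sub_projection_pos hV hτV hτ hcV).le
    (hn _ (Submodule.projection_apply_mem hV _)) (hn _ (Submodule.projection_apply_mem hV _))
    hUU hVV

end Projection

lemma exists_future_timelike_mem_spine {ι : Type*} {p : ι → E d} (hp : ∀ i, ‖p i‖ = 1)
    {i j : ι} (hij : p i ≠ p j) : ∃ τ ∈ spine p, ‖τ.2‖ < τ.1 := by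
  refine ⟨idealLift (p i) + idealLift (p j), add_mem (Submodule.subset_span ⟨i, rfl⟩)
    (Submodule.subset_span ⟨j, rfl⟩), ?_⟩
  have := norm_add_lt_of_not_sameRay fun h => hij (h.eq_of_norm_eq ((hp i).trans (hp j).symm))
  rw [hp i, hp j] at this
  exact this

lemma spine_eq_span_singleton {ι : Type*} {p : ι → E d} {i₀ : ι} (h : ∀ i, p i = p i₀) :
    spine p = ℝ ∙ idealLift (p i₀) := by
  have : Nonempty ι := ⟨i₀⟩
  simp only [spine, h, range_const]

end

theorem horo_proj_base_point_independent_general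
    {d K : ℕ} (hK : 0 < K) (b b' : E d) (p : Fin K → E d)
    (hb : b ∈ pball d) (hb' : b' ∈ pball d)
    (hp : ∀ i, ‖p i‖ = 1)
    (hbP : b ∉ GH (Set.range p)) (hb'P : b' ∉ GH (Set.range p))
    (π π' : E d → E d)
    (hπ : IsHoroProj b p π) (hπ' : IsHoroProj b' p π') :
    ∀ x ∈ pball d, ∀ y ∈ pball d, dH (π x) (π y) = dH (π' x) (π' y) := by
  intro x hx y hy
  have hu := fun z (hz : z ∈ pball d) => hπ.isLinearHoroProj hp hb hz
  have hu' := fun z (hz : z ∈ pball d) => hπ'.isLinearHoroProj hp hb' hz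
  rw [dH_eq_arcosh_neg_minkowski (hu x hx).1.1 (hu y hy).1.1,
    dH_eq_arcosh_neg_minkowski (hu' x hx).1.1 (hu' y hy).1.1]
  congr 2
  by_cases hall : ∀ i, p i = p ⟨0, hK⟩
  · rw [spine_eq_span_singleton hall] at hu hu'
    rw [(hu x hx).minkowski_eq_neg_cosh (hp _) hx hy (hu y hy),
      (hu' x hx).minkowski_eq_neg_cosh (hp _) hx hy (hu' y hy)]
  · obtain ⟨i, hi⟩ := not_forall.1 hall
    obtain ⟨τ, hτV, hτ⟩ := exists_future_timelike_mem_spine hp hi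
    have hV := isCompl_orthogonal_of_timelike_mem hτV (minkowski_self_lt_zero hτ)
    have hcV : ∀ {c}, c ∈ pball d → c ∉ GH (range p) → toHyperboloid c ∉ spine p :=
      fun hc hcP h => hcP (ballTrace_spine_subset_GH hp ⟨hc, h⟩)
    rw [(hu x hx).minkowski_eq_horoPairing hV hτV hτ hb (hcV hb hbP) hx hy (hu y hy),
      (hu' x hx).minkowski_eq_horoPairing hV hτV hτ hb' (hcV hb' hb'P) hx hy (hu' y hy)]

/-- Horospherical projections are base-point independent: for two
base points `b, b'` (not lying in the geodesic hull of the ideal points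
`p 1, …, p K`) and the corresponding horospherical projections `π`, `π'`, the
projected distances agree: `d_ℍ(π x, π y) = d_ℍ(π' x, π' y)` for all `x, y ∈ ℍ^d`. -/
theorem horo_proj_base_point_independent
    {d K : ℕ} (hK : 0 < K) (b b' : E d) (p : Fin K → E d)
    (hb : b ∈ pball d) (hb' : b' ∈ pball d)
    (hp : ∀ i, ‖p i‖ = 1)
    (hbP : b ∉ GH (Set.range p)) (hb'P : b' ∉ GH (Set.range p))
    (hind : ∀ i, p i ∉ closure (GH (Set.range p \ {p i})))
    (π π' : E d → E d)
    (hπ : IsHoroProj b p π) (hπ' : IsHoroProj b' p π') :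
    ∀ x ∈ pball d, ∀ y ∈ pball d, dH (π x) (π y) = dH (π' x) (π' y) :=
  horo_proj_base_point_independent_general hK b b' p hb hb' hp hbP hb'P π π' hπ hπ'
end
end

section
/- Let L be a geodesic in the hyperbolic plane ℍ² and let x, y ∈ ℍ² lie on the same side of L with d_ℍ(x,L) ≥ r and d_ℍ(y,L) ≥ r for some r ≥ 0. Let d = d_ℍ(x,y) and d′ = d_ℍ(π^G_L(x), π^G_L(y)) be the distance between the geodesic projections of x and y onto L. Then sinh(d′/2) ≤ sinh(d/2) / cosh(r). -/
noncomputable section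

open Set

namespace Aux

lemma cosh_arcosh {t : ℝ} (ht : 1 ≤ t) : Real.cosh (arcosh t) = t := by
  have h1 : (0:ℝ) ≤ t ^ 2 - 1 := by nlinarith
  have hs : Real.sqrt (t ^ 2 - 1) ^ 2 = t ^ 2 - 1 := Real.sq_sqrt h1
  have hsn : 0 ≤ Real.sqrt (t ^ 2 - 1) := Real.sqrt_nonneg _
  have hpos : 0 < t + Real.sqrt (t ^ 2 - 1) := by nlinarith
  rw [arcosh, Real.cosh_eq, Real.exp_log hpos, Real.exp_neg, Real.exp_log hpos]
  field_simp
  nlinarith [hs]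

lemma arcosh_nonneg {t : ℝ} (ht : 1 ≤ t) : 0 ≤ arcosh t :=
  Real.log_nonneg (by nlinarith [Real.sqrt_nonneg (t^2-1)])

end Aux

namespace Aux2
open Aux

lemma nsq (x : E 2) : ‖x‖^2 = x 0^2 + x 1^2 := by
  rw [EuclideanSpace.norm_eq, Real.sq_sqrt (by positivity)]
  simp [Fin.sum_univ_two, sq_abs]

lemma nsubsq (x y : E 2) : ‖x - y‖^2 = (x 0 - y 0)^2 + (x 1 - y 1)^2 := by
  rw [nsq]
  simp

lemma ball_pos {x : E 2} (hx : x ∈ pball 2) : 0 < 1 - ‖x‖^2 := by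
  have : ‖x‖ < 1 := hx
  nlinarith [norm_nonneg x]

/-- hyperboloid coordinates -/
def uu (x : E 2) : ℝ := (1 + ‖x‖^2) / (1 - ‖x‖^2)
def v0 (x : E 2) : ℝ := 2 * x 0 / (1 - ‖x‖^2)
def v1 (x : E 2) : ℝ := 2 * x 1 / (1 - ‖x‖^2)
def mk' (x y : E 2) : ℝ := uu x * uu y - v0 x * v0 y - v1 x * v1 y

lemma one_le_arg {x y : E 2} (hx : x ∈ pball 2) (hy : y ∈ pball 2) :
    1 ≤ 1 + 2 * ‖x - y‖ ^ 2 / ((1 - ‖x‖ ^ 2) * (1 - ‖y‖ ^ 2)) := by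
  have h1 := ball_pos hx; have h2 := ball_pos hy
  have : 0 ≤ 2 * ‖x - y‖ ^ 2 / ((1 - ‖x‖ ^ 2) * (1 - ‖y‖ ^ 2)) := by positivity
  linarith

lemma dH_nonneg {x y : E 2} (hx : x ∈ pball 2) (hy : y ∈ pball 2) : 0 ≤ dH x y :=
  arcosh_nonneg (one_le_arg hx hy)

lemma cosh_dH {x y : E 2} (hx : x ∈ pball 2) (hy : y ∈ pball 2) :
    Real.cosh (dH x y) = mk' x y := by
  rw [dH, cosh_arcosh (one_le_arg hx hy), mk', uu, uu, v0, v0, v1, v1]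
  have h1 := ball_pos hx; have h2 := ball_pos hy
  rw [nsubsq]
  rw [nsq] at h1 h2 ⊢
  rw [nsq y]
  field_simp
  ring

lemma mk_self {x : E 2} (hx : x ∈ pball 2) : mk' x x = 1 := by
  have h1 := ball_pos hx
  rw [mk', uu, v0, v1]
  rw [nsq] at h1 ⊢
  field_simp
  ring

lemma cosh_mono {a b : ℝ} (ha : 0 ≤ a) (hab : a ≤ b) : Real.cosh a ≤ Real.cosh b :=
  Real.cosh_le_cosh.2 (by rw [abs_of_nonneg ha, abs_of_nonneg (ha.trans hab)]; exact hab)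

end Aux2

namespace Aux3

/-- If `W` is Minkowski-orthogonal to `P` (unit timelike) and `Q` (unit spacelike,
orthogonal to `P`), then `W` is proportional to the Minkowski cross product `N`,
and its Minkowski norm is `-κ²`. -/
lemma perp_decomp (e p0 p1 p2 q0 q1 q2 w0 w1 w2 : ℝ) (he : e ≠ 0)
    (hP : p0^2 - p1^2 - p2^2 = 1) (hQ : q0^2 - q1^2 - q2^2 = -e^2)
    (hPQ : p0*q0 - p1*q1 - p2*q2 = 0)
    (hWP : w0*p0 - w1*p1 - w2*p2 = 0) (hWQ : w0*q0 - w1*q1 - w2*q2 = 0) :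
    ∃ κ : ℝ, w0 = κ*(p1*q2 - p2*q1) ∧ w1 = κ*(p0*q2 - p2*q0) ∧
      w2 = κ*(p1*q0 - p0*q1) ∧ w0^2 - w1^2 - w2^2 = -(κ^2 * e^2) := by
  set n0 := p1*q2 - p2*q1 with hn0
  set n1 := p0*q2 - p2*q0 with hn1
  set n2 := p1*q0 - p0*q1 with hn2
  have he2 : 0 < e^2 := by positivity
  have hN : n0^2 - n1^2 - n2^2 = -e^2 := by
    rw [hn0, hn1, hn2]
    linear_combination (q0^2 - q1^2 - q2^2) * hP + hQ - (p0*q0 - p1*q1 - p2*q2) * hPQ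
  have e0 : w1 * n2 = w2 * n1 := by rw [hn1, hn2]; linear_combination p0 * hWQ - q0 * hWP
  have e1 : w0 * n2 = w2 * n0 := by rw [hn0, hn2]; linear_combination p1 * hWQ - q1 * hWP
  have e2 : w0 * n1 = w1 * n0 := by rw [hn0, hn1]; linear_combination q2 * hWP - p2 * hWQ
  have hDpos : 0 < n1^2 + n2^2 := by nlinarith [sq_nonneg n0]
  have hDne : n1^2 + n2^2 ≠ 0 := ne_of_gt hDpos
  refine ⟨(w1*n1 + w2*n2)/(n1^2 + n2^2), ?_, ?_, ?_, ?_⟩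
  · rw [div_mul_eq_mul_div, eq_div_iff hDne]; linear_combination n1 * e2 + n2 * e1
  · rw [div_mul_eq_mul_div, eq_div_iff hDne]; linear_combination n2 * e0
  · rw [div_mul_eq_mul_div, eq_div_iff hDne]; linear_combination (-n1) * e0
  · have h1 : w1 * (n1^2+n2^2) = (w1*n1 + w2*n2) * n1 := by linear_combination n2 * e0
    have h2 : w2 * (n1^2+n2^2) = (w1*n1 + w2*n2) * n2 := by linear_combination (-n1) * e0
    have h0 : w0 * (n1^2+n2^2) = (w1*n1 + w2*n2) * n0 := by linear_combination n1 * e2 + n2 * e1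
    field_simp
    linear_combination (w0*(n1^2+n2^2) + (w1*n1+w2*n2)*n0) * h0
      - (w1*(n1^2+n2^2) + (w1*n1+w2*n2)*n1) * h1
      - (w2*(n1^2+n2^2) + (w1*n1+w2*n2)*n2) * h2
      + (w1*n1+w2*n2)^2 * hN

end Aux3

namespace Aux4
open Aux3

/-- The hyperboloid lift of a unit-speed geodesic is `cosh t • P + sinh t • Q`. -/
lemma geodesic_linear (a b c : ℝ → ℝ)
    (H : ∀ s t, a s * a t - b s * b t - c s * c t = Real.cosh (s - t)) :
    ∃ P0 P1 P2 Q0 Q1 Q2 : ℝ,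
      P0^2 - P1^2 - P2^2 = 1 ∧ Q0^2 - Q1^2 - Q2^2 = -1 ∧ P0*Q0 - P1*Q1 - P2*Q2 = 0 ∧
      ∀ t, a t = Real.cosh t * P0 + Real.sinh t * Q0 ∧
           b t = Real.cosh t * P1 + Real.sinh t * Q1 ∧
           c t = Real.cosh t * P2 + Real.sinh t * Q2 := by
  set s1 := Real.sinh 1 with hs1def
  set c1 := Real.cosh 1 with hc1def
  have hs1 : s1 ≠ 0 := ne_of_gt (by rw [hs1def]; exact Real.sinh_pos_iff.2 one_pos)
  have hch : c1^2 - s1^2 = 1 := Real.cosh_sq_sub_sinh_sq 1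
  have H00 : a 0 * a 0 - b 0 * b 0 - c 0 * c 0 = 1 := by simpa using H 0 0
  have H11 : a 1 * a 1 - b 1 * b 1 - c 1 * c 1 = 1 := by simpa using H 1 1
  have H01 : a 0 * a 1 - b 0 * b 1 - c 0 * c 1 = c1 := by
    have := H 0 1; simpa using this
  have hPQu : a 0 * (a 1 - c1 * a 0) - b 0 * (b 1 - c1 * b 0) - c 0 * (c 1 - c1 * c 0) = 0 := by
    linear_combination H01 - c1 * H00
  have hQu : (a 1 - c1 * a 0)^2 - (b 1 - c1 * b 0)^2 - (c 1 - c1 * c 0)^2 = -s1^2 := by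
    linear_combination H11 - (2*c1) * H01 + c1^2 * H00 - hch
  refine ⟨a 0, b 0, c 0, (a 1 - c1 * a 0)/s1, (b 1 - c1 * b 0)/s1, (c 1 - c1 * c 0)/s1,
    by linear_combination H00, ?_, ?_, ?_⟩
  · have : ((a 1 - c1 * a 0)/s1)^2 - ((b 1 - c1 * b 0)/s1)^2 - ((c 1 - c1 * c 0)/s1)^2
        = ((a 1 - c1 * a 0)^2 - (b 1 - c1 * b 0)^2 - (c 1 - c1 * c 0)^2)/s1^2 := by ring
    rw [this, hQu]
    field_simp
  · have : a 0 * ((a 1 - c1 * a 0)/s1) - b 0 * ((b 1 - c1 * b 0)/s1) - c 0 * ((c 1 - c1 * c 0)/s1)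
        = (a 0 * (a 1 - c1 * a 0) - b 0 * (b 1 - c1 * b 0) - c 0 * (c 1 - c1 * c 0))/s1 := by ring
    rw [this, hPQu, zero_div]
  · intro t
    set ct := Real.cosh t with hctdef
    set st := Real.sinh t with hstdef
    have hcht : ct^2 - st^2 = 1 := Real.cosh_sq_sub_sinh_sq t
    have Ht0 : a t * a 0 - b t * b 0 - c t * c 0 = ct := by simpa using H t 0
    have Htt : a t * a t - b t * b t - c t * c t = 1 := by simpa using H t t
    have Ht1 : a t * a 1 - b t * b 1 - c t * c 1 = ct * c1 - st * s1 := by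
      have := H t 1
      rwa [Real.cosh_sub] at this
    -- scaled perpendicular component
    have hWP : (s1 * a t - s1 * ct * a 0 - st * (a 1 - c1 * a 0)) * a 0
        - (s1 * b t - s1 * ct * b 0 - st * (b 1 - c1 * b 0)) * b 0
        - (s1 * c t - s1 * ct * c 0 - st * (c 1 - c1 * c 0)) * c 0 = 0 := by
      linear_combination s1 * Ht0 - (s1*ct) * H00 - st * hPQu
    have hWQ : (s1 * a t - s1 * ct * a 0 - st * (a 1 - c1 * a 0)) * (a 1 - c1 * a 0)
        - (s1 * b t - s1 * ct * b 0 - st * (b 1 - c1 * b 0)) * (b 1 - c1 * b 0)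
        - (s1 * c t - s1 * ct * c 0 - st * (c 1 - c1 * c 0)) * (c 1 - c1 * c 0) = 0 := by
      linear_combination s1 * Ht1 - (s1*c1) * Ht0 - (s1*ct) * hPQu - st * hQu
    have hWW : (s1 * a t - s1 * ct * a 0 - st * (a 1 - c1 * a 0))^2
        - (s1 * b t - s1 * ct * b 0 - st * (b 1 - c1 * b 0))^2
        - (s1 * c t - s1 * ct * c 0 - st * (c 1 - c1 * c 0))^2 = 0 := by
      linear_combination s1^2 * Htt - (2*s1^2*ct) * Ht0 - (2*s1*st) * Ht1 + (2*s1*st*c1) * Ht0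
        + (s1^2*ct^2) * H00 + (2*s1*ct*st) * hPQu + st^2 * hQu - s1^2 * hcht
    obtain ⟨κ, hk0, hk1, hk2, hkW⟩ := perp_decomp s1 (a 0) (b 0) (c 0)
      (a 1 - c1 * a 0) (b 1 - c1 * b 0) (c 1 - c1 * c 0) _ _ _ hs1
      (by linear_combination H00) hQu hPQu hWP hWQ
    have hκ : κ = 0 := by
      have h2 : κ^2 * s1^2 = 0 := by linarith [hkW, hWW]
      rcases mul_eq_zero.1 h2 with h | h
      · exact pow_eq_zero_iff (n := 2) (by norm_num) |>.1 h
      · exact absurd (pow_eq_zero_iff (n := 2) (by norm_num) |>.1 h) hs1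
    rw [hκ, zero_mul] at hk0 hk1 hk2
    refine ⟨?_, ?_, ?_⟩
    · field_simp; linear_combination hk0
    · field_simp; linear_combination hk1
    · field_simp; linear_combination hk2

end Aux4

namespace Aux5
open Aux3


lemma ppos (p q cs ss cR : ℝ) (hcs : cs^2 - ss^2 = 1) (h1cs : 1 ≤ cs) (h1R : 1 ≤ cR)
    (hpq1 : 1 ≤ p^2 - q^2) (hmin' : p*cs + q*ss = cR) : 0 < p := by
  have h1 : (p*cs)^2 - (q*ss)^2 > 0 := by nlinarith [sq_nonneg q, sq_nonneg ss]
  have h2 : p*cs - q*ss > 0 := by nlinarith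
  nlinarith

lemma tangent_zero (p q cs ss cR m : ℝ) (hcs : cs^2 - ss^2 = 1)
    (hm2 : m^2 = p^2 - q^2) (h1R : 1 ≤ cR)
    (hmin' : p*cs + q*ss = cR) (hlem : cR ≤ m) :
    p*ss + q*cs = 0 ∧ cR^2 = p^2 - q^2 := by
  have hA : cR^2 = p^2 - q^2 + (p*ss + q*cs)^2 := by
    linear_combination (-(p*cs + q*ss + cR))*hmin' + (p^2 - q^2)*hcs
  have hB : cR^2 ≤ m^2 := by nlinarith
  constructor
  · nlinarith [sq_nonneg (p*ss + q*cs)]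
  · nlinarith [sq_nonneg (p*ss + q*cs)]

lemma mpos (m v : ℝ) (hm0 : 0 ≤ m) (hm2 : m^2 = v) (h1 : 1 ≤ v) : 0 < m := by nlinarith

set_option maxHeartbeats 1000000 in
lemma proj_point (P0 P1 P2 Q0 Q1 Q2 X0 X1 X2 s0 R : ℝ)
    (hP : P0^2 - P1^2 - P2^2 = 1) (hQ : Q0^2 - Q1^2 - Q2^2 = -1)
    (hPQ : P0*Q0 - P1*Q1 - P2*Q2 = 0)
    (hX : X0^2 - X1^2 - X2^2 = 1)
    (hR : 0 ≤ R)
    (hmin : X0*(Real.cosh s0 * P0 + Real.sinh s0 * Q0)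
      - X1*(Real.cosh s0 * P1 + Real.sinh s0 * Q1)
      - X2*(Real.cosh s0 * P2 + Real.sinh s0 * Q2) = Real.cosh R)
    (hle : ∀ t, Real.cosh R ≤ X0*(Real.cosh t * P0 + Real.sinh t * Q0)
      - X1*(Real.cosh t * P1 + Real.sinh t * Q1)
      - X2*(Real.cosh t * P2 + Real.sinh t * Q2)) :
    ∃ κ : ℝ, κ^2 = Real.sinh R ^ 2 ∧
      X0 = Real.cosh R * (Real.cosh s0 * P0 + Real.sinh s0 * Q0) + κ * (P1*Q2 - P2*Q1) ∧
      X1 = Real.cosh R * (Real.cosh s0 * P1 + Real.sinh s0 * Q1) + κ * (P0*Q2 - P2*Q0) ∧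
      X2 = Real.cosh R * (Real.cosh s0 * P2 + Real.sinh s0 * Q2) + κ * (P1*Q0 - P0*Q1) := by
  set p := X0*P0 - X1*P1 - X2*P2 with hp
  set q := X0*Q0 - X1*Q1 - X2*Q2 with hq
  clear_value p q
  -- perpendicular component
  have hWP : (X0 - p*P0 + q*Q0)*P0 - (X1 - p*P1 + q*Q1)*P1 - (X2 - p*P2 + q*Q2)*P2 = 0 := by
    rw [hp, hq]; linear_combination (-(X0*P0 - X1*P1 - X2*P2)) * hP + (X0*Q0 - X1*Q1 - X2*Q2) * hPQ
  have hWQ : (X0 - p*P0 + q*Q0)*Q0 - (X1 - p*P1 + q*Q1)*Q1 - (X2 - p*P2 + q*Q2)*Q2 = 0 := by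
    rw [hp, hq]; linear_combination (X0*Q0 - X1*Q1 - X2*Q2) * hQ + (-(X0*P0 - X1*P1 - X2*P2)) * hPQ
  obtain ⟨κ, hk0, hk1, hk2, hkW⟩ := perp_decomp 1 P0 P1 P2 Q0 Q1 Q2 _ _ _ one_ne_zero
    hP (by linarith [hQ]) hPQ hWP hWQ
  have hWW : (X0 - p*P0 + q*Q0)^2 - (X1 - p*P1 + q*Q1)^2 - (X2 - p*P2 + q*Q2)^2
      = 1 - p^2 + q^2 := by
    rw [hp, hq]
    linear_combination hX + (X0*P0 - X1*P1 - X2*P2)^2 * hP + (X0*Q0 - X1*Q1 - X2*Q2)^2 * hQ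
      - (2*(X0*P0 - X1*P1 - X2*P2)*(X0*Q0 - X1*Q1 - X2*Q2)) * hPQ
  rw [one_pow, mul_one] at hkW
  have hκ2 : κ^2 = p^2 - q^2 - 1 := by linarith [hWW, hkW]
  have hpq1 : 1 ≤ p^2 - q^2 := by linarith [sq_nonneg κ, hκ2]
  -- f(s0) in terms of p, q
  have hmin' : p * Real.cosh s0 + q * Real.sinh s0 = Real.cosh R := by
    rw [hp, hq]; linear_combination hmin
  have hcs0 := Real.cosh_sq_sub_sinh_sq s0
  have h1R := Real.one_le_cosh R
  have hppos : 0 < p :=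
    ppos p q _ _ _ hcs0 (Real.one_le_cosh s0) h1R hpq1 hmin'
  set m := Real.sqrt (p^2 - q^2) with hmdef
  have hm0 : 0 ≤ m := Real.sqrt_nonneg _
  have hm2 : m^2 = p^2 - q^2 := Real.sq_sqrt (le_trans zero_le_one hpq1)
  clear_value m
  have hmpos : 0 < m := mpos m _ hm0 hm2 hpq1
  have hcosht : Real.cosh (Real.arsinh (-q/m)) = p/m := by
    rw [Real.cosh_arsinh]
    have h1 : 1 + (-q/m)^2 = (p/m)^2 := by
      field_simp
      linear_combination hm2
    rw [h1, Real.sqrt_sq (by positivity)]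
  have hsinht : Real.sinh (Real.arsinh (-q/m)) = -q/m := Real.sinh_arsinh _
  have hlem : Real.cosh R ≤ m := by
    have h2 := hle (Real.arsinh (-q/m))
    rw [hcosht, hsinht] at h2
    calc Real.cosh R ≤ X0*(p/m * P0 + -q/m * Q0) - X1*(p/m * P1 + -q/m * Q1)
        - X2*(p/m * P2 + -q/m * Q2) := h2
      _ = (p * p - q * q)/m := by rw [hp, hq]; ring
      _ = m := by rw [div_eq_iff (ne_of_gt hmpos)]; linear_combination -hm2
  obtain ⟨hQ', hcR2⟩ := tangent_zero p q _ _ _ m hcs0 hm2 h1R hmin' hlem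
  have hκs : κ^2 = Real.sinh R ^ 2 := by
    rw [Real.sinh_sq]; linarith [hκ2, hcR2]
  have hpv : p = Real.cosh R * Real.cosh s0 := by
    linear_combination Real.cosh s0 * hmin' - Real.sinh s0 * hQ' - p * hcs0
  have hqv : q = -(Real.cosh R * Real.sinh s0) := by
    linear_combination -(Real.sinh s0 * hmin') + Real.cosh s0 * hQ' - q * hcs0
  refine ⟨κ, hκs, ?_, ?_, ?_⟩
  · linear_combination hk0 + P0 * hpv - Q0 * hqv
  · linear_combination hk1 + P1 * hpv - Q1 * hqv
  · linear_combination hk2 + P2 * hpv - Q2 * hqv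

set_option maxHeartbeats 1000000 in
lemma two_points (P0 P1 P2 Q0 Q1 Q2 X0 X1 X2 Y0 Y1 Y2 s0 t0 Rx Ry κ μ : ℝ)
    (hP : P0^2 - P1^2 - P2^2 = 1) (hQ : Q0^2 - Q1^2 - Q2^2 = -1)
    (hPQ : P0*Q0 - P1*Q1 - P2*Q2 = 0)
    (hRx : 0 ≤ Rx) (hRy : 0 ≤ Ry)
    (hκ : κ^2 = Real.sinh Rx ^ 2) (hμ : μ^2 = Real.sinh Ry ^ 2)
    (hX0 : X0 = Real.cosh Rx * (Real.cosh s0 * P0 + Real.sinh s0 * Q0) + κ * (P1*Q2 - P2*Q1))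
    (hX1 : X1 = Real.cosh Rx * (Real.cosh s0 * P1 + Real.sinh s0 * Q1) + κ * (P0*Q2 - P2*Q0))
    (hX2 : X2 = Real.cosh Rx * (Real.cosh s0 * P2 + Real.sinh s0 * Q2) + κ * (P1*Q0 - P0*Q1))
    (hY0 : Y0 = Real.cosh Ry * (Real.cosh t0 * P0 + Real.sinh t0 * Q0) + μ * (P1*Q2 - P2*Q1))
    (hY1 : Y1 = Real.cosh Ry * (Real.cosh t0 * P1 + Real.sinh t0 * Q1) + μ * (P0*Q2 - P2*Q0))
    (hY2 : Y2 = Real.cosh Ry * (Real.cosh t0 * P2 + Real.sinh t0 * Q2) + μ * (P1*Q0 - P0*Q1)) :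
    Real.cosh Rx * Real.cosh Ry * Real.cosh (s0 - t0) - Real.sinh Rx * Real.sinh Ry
      ≤ X0*Y0 - X1*Y1 - X2*Y2 := by
  have hN : (P1*Q2 - P2*Q1)^2 - (P0*Q2 - P2*Q0)^2 - (P1*Q0 - P0*Q1)^2 = -1 := by
    linear_combination (Q0^2 - Q1^2 - Q2^2) * hP + hQ - (P0*Q0 - P1*Q1 - P2*Q2) * hPQ
  have key : X0*Y0 - X1*Y1 - X2*Y2
      = Real.cosh Rx * Real.cosh Ry * (Real.cosh s0 * Real.cosh t0 - Real.sinh s0 * Real.sinh t0)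
        - κ*μ := by
    rw [hX0, hX1, hX2, hY0, hY1, hY2]
    linear_combination (Real.cosh Rx * Real.cosh s0 * Real.cosh Ry * Real.cosh t0) * hP
      + (Real.cosh Rx * Real.sinh s0 * Real.cosh Ry * Real.sinh t0) * hQ
      + (Real.cosh Rx * Real.cosh s0 * Real.cosh Ry * Real.sinh t0
        + Real.cosh Ry * Real.cosh t0 * Real.cosh Rx * Real.sinh s0) * hPQ
      + (κ*μ) * hN
  rw [key, Real.cosh_sub]
  have hsx : 0 ≤ Real.sinh Rx := Real.sinh_nonneg_iff.2 hRx
  have hsy : 0 ≤ Real.sinh Ry := Real.sinh_nonneg_iff.2 hRy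
  have habs : κ * μ ≤ Real.sinh Rx * Real.sinh Ry := by
    calc κ * μ ≤ |κ * μ| := le_abs_self _
      _ = |κ| * |μ| := abs_mul _ _
      _ = Real.sinh Rx * Real.sinh Ry := by
          rw [← Real.sqrt_sq_eq_abs, ← Real.sqrt_sq_eq_abs, hκ, hμ,
            Real.sqrt_sq hsx, Real.sqrt_sq hsy]
  linarith

end Aux5


namespace Aux6

lemma final_ineq (dxy dpq r Rx Ry : ℝ) (hr : 0 ≤ r) (hd : 0 ≤ dxy) (hd' : 0 ≤ dpq)
    (hRxr : r ≤ Rx) (hRyr : r ≤ Ry)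
    (hkey : Real.cosh Rx * Real.cosh Ry * Real.cosh dpq - Real.sinh Rx * Real.sinh Ry
      ≤ Real.cosh dxy) :
    Real.sinh (dpq/2) ≤ Real.sinh (dxy/2) / Real.cosh r := by
  have hcr : 0 < Real.cosh r := Real.cosh_pos r
  rw [le_div_iff₀ hcr]
  have hdbl : ∀ u : ℝ, Real.cosh u = 2 * Real.sinh (u/2)^2 + 1 := by
    intro u
    have h2 : Real.cosh u = Real.cosh (2*(u/2)) := by ring_nf
    rw [h2, Real.cosh_two_mul]
    have := Real.cosh_sq (u/2)
    linarith
  have h1 := hdbl dxy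
  have h1' := hdbl dpq
  have hcRx := Aux2.cosh_mono hr hRxr
  have hcRy := Aux2.cosh_mono hr hRyr
  have hAB : Real.cosh r * Real.cosh r ≤ Real.cosh Rx * Real.cosh Ry :=
    mul_le_mul hcRx hcRy (le_of_lt hcr) (by positivity)
  have hsub : 1 ≤ Real.cosh Rx * Real.cosh Ry - Real.sinh Rx * Real.sinh Ry := by
    have e := Real.cosh_sub Rx Ry
    linarith [Real.one_le_cosh (Rx - Ry)]
  have hsq : (Real.cosh r * Real.sinh (dpq/2))^2 ≤ Real.sinh (dxy/2)^2 := by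
    have hd1 : 0 ≤ Real.cosh dpq - 1 := by linarith [Real.one_le_cosh dpq]
    have hm : 0 ≤ (Real.cosh Rx * Real.cosh Ry - Real.cosh r * Real.cosh r)
        * (Real.cosh dpq - 1) := mul_nonneg (by linarith) hd1
    nlinarith [hkey, h1, h1', hm, hsub]
  have hsp : 0 ≤ Real.sinh (dpq/2) := Real.sinh_nonneg_iff.2 (by linarith)
  have hsd : 0 ≤ Real.sinh (dxy/2) := Real.sinh_nonneg_iff.2 (by linarith)
  nlinarith [hsq, hsp, hsd, hcr, mul_nonneg (le_of_lt hcr) hsp]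

end Aux6

/-- Let `L` be a geodesic in the hyperbolic plane `ℍ²` and let
`x, y` lie on the same side of `L`, both at hyperbolic distance at least `r ≥ 0`
from `L`. Setting `d = d_ℍ(x,y)` and `d' = d_ℍ(π^G_L(x), π^G_L(y))` for the geodesic
(closest-point) projections onto `L`, one has `sinh(d'/2) ≤ sinh(d/2) / cosh r`. -/
theorem geodesic_proj_distance_bound_2D
    (L : Set (E 2)) (hL : IsGeodesicLine L)
    (r : ℝ) (hr : 0 ≤ r)
    (x y : E 2) (hx : x ∈ pball 2) (hy : y ∈ pball 2)
    (hside : SameSide L x y)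
    (hxr : ∀ ℓ ∈ L, r ≤ dH x ℓ) (hyr : ∀ ℓ ∈ L, r ≤ dH y ℓ)
    (px py : E 2) (hpx : IsNearestPt L x px) (hpy : IsNearestPt L y py) :
    Real.sinh (dH px py / 2) ≤ Real.sinh (dH x y / 2) / Real.cosh r := by
  classical
  open Aux Aux2 Aux3 Aux4 Aux5 Aux6 in
  obtain ⟨γ, ⟨hγball, hγdist⟩, hLr⟩ := hL
  subst hLr
  -- the hyperboloid lift of the geodesic
  have H : ∀ s t : ℝ, Aux2.uu (γ s) * Aux2.uu (γ t) - Aux2.v0 (γ s) * Aux2.v0 (γ t)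
      - Aux2.v1 (γ s) * Aux2.v1 (γ t) = Real.cosh (s - t) := by
    intro s t
    have h1 : Real.cosh (dH (γ s) (γ t)) = Aux2.mk' (γ s) (γ t) :=
      Aux2.cosh_dH (hγball s) (hγball t)
    rw [hγdist s t, Real.cosh_abs] at h1
    rw [Aux2.mk'] at h1
    linarith [h1]
  obtain ⟨P0, P1, P2, Q0, Q1, Q2, hP, hQ, hPQ, hF⟩ :=
    Aux4.geodesic_linear (fun t => Aux2.uu (γ t)) (fun t => Aux2.v0 (γ t))
      (fun t => Aux2.v1 (γ t)) H
  have hFa : ∀ t : ℝ, Aux2.uu (γ t) = Real.cosh t * P0 + Real.sinh t * Q0 := fun t => (hF t).1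
  have hFb : ∀ t : ℝ, Aux2.v0 (γ t) = Real.cosh t * P1 + Real.sinh t * Q1 := fun t => (hF t).2.1
  have hFc : ∀ t : ℝ, Aux2.v1 (γ t) = Real.cosh t * P2 + Real.sinh t * Q2 := fun t => (hF t).2.2
  obtain ⟨s0, hs0⟩ := hpx.1
  obtain ⟨t0, ht0⟩ := hpy.1
  have hpxball : px ∈ pball 2 := hs0 ▸ hγball s0
  have hpyball : py ∈ pball 2 := ht0 ▸ hγball t0
  have hRx0 : 0 ≤ dH x px := Aux2.dH_nonneg hx hpxball
  have hRy0 : 0 ≤ dH y py := Aux2.dH_nonneg hy hpyball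
  -- data for the point x
  have hXself : (Aux2.uu x)^2 - (Aux2.v0 x)^2 - (Aux2.v1 x)^2 = 1 := by
    have := Aux2.mk_self hx
    rw [Aux2.mk'] at this
    linarith [this]
  have hminx : Aux2.uu x * (Real.cosh s0 * P0 + Real.sinh s0 * Q0)
      - Aux2.v0 x * (Real.cosh s0 * P1 + Real.sinh s0 * Q1)
      - Aux2.v1 x * (Real.cosh s0 * P2 + Real.sinh s0 * Q2) = Real.cosh (dH x px) := by
    rw [← hFa s0, ← hFb s0, ← hFc s0, hs0]
    have e1 : Real.cosh (dH x px) = Aux2.mk' x px := Aux2.cosh_dH hx hpxball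
    rw [Aux2.mk'] at e1
    linarith [e1]
  have hlex : ∀ t : ℝ, Real.cosh (dH x px) ≤ Aux2.uu x * (Real.cosh t * P0 + Real.sinh t * Q0)
      - Aux2.v0 x * (Real.cosh t * P1 + Real.sinh t * Q1)
      - Aux2.v1 x * (Real.cosh t * P2 + Real.sinh t * Q2) := by
    intro t
    rw [← hFa t, ← hFb t, ← hFc t]
    have h2 : dH x px ≤ dH x (γ t) := hpx.2 (γ t) ⟨t, rfl⟩
    have h3 := Aux2.cosh_mono hRx0 h2
    have e2 : Real.cosh (dH x (γ t)) = Aux2.mk' x (γ t) := Aux2.cosh_dH hx (hγball t)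
    rw [e2, Aux2.mk'] at h3
    linarith [h3]
  obtain ⟨κ, hκ2, hXd0, hXd1, hXd2⟩ :=
    Aux5.proj_point P0 P1 P2 Q0 Q1 Q2 (Aux2.uu x) (Aux2.v0 x) (Aux2.v1 x) s0 (dH x px)
      hP hQ hPQ hXself hRx0 hminx hlex
  -- data for the point y
  have hYself : (Aux2.uu y)^2 - (Aux2.v0 y)^2 - (Aux2.v1 y)^2 = 1 := by
    have := Aux2.mk_self hy
    rw [Aux2.mk'] at this
    linarith [this]
  have hminy : Aux2.uu y * (Real.cosh t0 * P0 + Real.sinh t0 * Q0)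
      - Aux2.v0 y * (Real.cosh t0 * P1 + Real.sinh t0 * Q1)
      - Aux2.v1 y * (Real.cosh t0 * P2 + Real.sinh t0 * Q2) = Real.cosh (dH y py) := by
    rw [← hFa t0, ← hFb t0, ← hFc t0, ht0]
    have e1 : Real.cosh (dH y py) = Aux2.mk' y py := Aux2.cosh_dH hy hpyball
    rw [Aux2.mk'] at e1
    linarith [e1]
  have hley : ∀ t : ℝ, Real.cosh (dH y py) ≤ Aux2.uu y * (Real.cosh t * P0 + Real.sinh t * Q0)
      - Aux2.v0 y * (Real.cosh t * P1 + Real.sinh t * Q1)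
      - Aux2.v1 y * (Real.cosh t * P2 + Real.sinh t * Q2) := by
    intro t
    rw [← hFa t, ← hFb t, ← hFc t]
    have h2 : dH y py ≤ dH y (γ t) := hpy.2 (γ t) ⟨t, rfl⟩
    have h3 := Aux2.cosh_mono hRy0 h2
    have e2 : Real.cosh (dH y (γ t)) = Aux2.mk' y (γ t) := Aux2.cosh_dH hy (hγball t)
    rw [e2, Aux2.mk'] at h3
    linarith [h3]
  obtain ⟨μ, hμ2, hYd0, hYd1, hYd2⟩ :=
    Aux5.proj_point P0 P1 P2 Q0 Q1 Q2 (Aux2.uu y) (Aux2.v0 y) (Aux2.v1 y) t0 (dH y py)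
      hP hQ hPQ hYself hRy0 hminy hley
  -- the key inequality
  have hkey0 := Aux5.two_points P0 P1 P2 Q0 Q1 Q2 (Aux2.uu x) (Aux2.v0 x) (Aux2.v1 x)
    (Aux2.uu y) (Aux2.v0 y) (Aux2.v1 y) s0 t0 (dH x px) (dH y py) κ μ
    hP hQ hPQ hRx0 hRy0 hκ2 hμ2 hXd0 hXd1 hXd2 hYd0 hYd1 hYd2
  have hxy : Real.cosh (dH x y) = Aux2.uu x * Aux2.uu y - Aux2.v0 x * Aux2.v0 y
      - Aux2.v1 x * Aux2.v1 y := by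
    have := Aux2.cosh_dH hx hy
    rw [Aux2.mk'] at this
    linarith [this]
  have hd' : dH px py = |s0 - t0| := by rw [← hs0, ← ht0]; exact hγdist s0 t0
  have hcoshd' : Real.cosh (dH px py) = Real.cosh (s0 - t0) := by rw [hd', Real.cosh_abs]
  have hkey : Real.cosh (dH x px) * Real.cosh (dH y py) * Real.cosh (dH px py)
      - Real.sinh (dH x px) * Real.sinh (dH y py) ≤ Real.cosh (dH x y) := by
    rw [hxy, hcoshd']
    exact hkey0
  exact Aux6.final_ineq (dH x y) (dH px py) r (dH x px) (dH y py) hr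
    (Aux2.dH_nonneg hx hy) (Aux2.dH_nonneg hpxball hpyball)
    (hxr px hpx.1) (hyr py hpy.1) hkey
end
end
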